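/- arXiv:0910.1645 — 7 statements merged into one kernel-verified Lean document; each statement's English description precedes it below -/
import Mathlib

section
/- Let S_0, …, S_8 be a Cl⁺(9)-system on ℝ^16. Then the product S_0S_1···S_8 equals id or −id. -/
/-!
For anticommuting involutions `e₀, …, eₘ` and `s = {i₁ < ⋯ < iₖ}` put `e_s = e_{i₁} ⋯ e_{iₖ}`.
Then `e_s e_t = ± e_{s ∆ t}`, and `tr e_s = 0` unless `s = ∅` or `s = univ`, because some `e_k`
anticommutes with `e_s`. Hence the `2ᵐ` monomials `e_s` with `0 ∉ s` are orthogonal for the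
trace form `(f, g) ↦ tr (f g)`, with nonzero diagonal, so when `dim V ² = 2ᵐ` they form a basis
of `End V`. Pairing `ω = e_univ` against this basis, `tr (ω e_s) = ± tr e_{univ ∆ s} = 0` for
`s ≠ ∅`, so `ω = c • 1`; finally `ω² = ±1` forces `c = ±1` over an ordered field.
-/

abbrev E16 := EuclideanSpace ℝ (Fin 16)

open Finset Module
open scoped symmDiff

structure IsAnticommutingInvolutions {ι A : Type*} [Ring A] (e : ι → A) : Prop where
  mul_self : ∀ i, e i * e i = 1
  anticomm : ∀ i j, i ≠ j → e i * e j = -(e j * e i)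

lemma isAnticommutingInvolutions_of_mul_add_mul {ι K A : Type*} [DecidableEq ι] [Field K]
    [NeZero (2 : K)] [Ring A] [Module K A] {e : ι → A}
    (h : ∀ i j, e i * e j + e j * e i = if i = j then (2 : K) • (1 : A) else 0) :
    IsAnticommutingInvolutions e where
  mul_self i := by
    have hi := h i i
    rw [if_pos rfl, ← two_smul K] at hi
    exact smul_right_injective A two_ne_zero hi
  anticomm i j hij := by
    have hij' := h i j
    rw [if_neg hij] at hij'
    exact eq_neg_of_add_eq_zero_left hij'

namespace Finset

variable {α : Type*} [DecidableEq α] {a : α} {s : Finset α}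

lemma singleton_symmDiff_of_mem (h : a ∈ s) : {a} ∆ s = s.erase a := by
  ext x
  by_cases hx : x = a <;> simp [mem_symmDiff, hx, h]

lemma singleton_symmDiff_of_notMem (h : a ∉ s) : {a} ∆ s = insert a s := by
  ext x
  by_cases hx : x = a <;> simp [mem_symmDiff, hx, h]

end Finset

section Ring

variable {A : Type*} [Ring A]

lemma mul_list_prod_map_of_notMem {ι : Type*} {e : ι → A}
    (hanti : ∀ i j, i ≠ j → e i * e j = -(e j * e i)) {j : ι} {l : List ι} (hj : j ∉ l) :
    e j * (l.map e).prod = (-1 : ℤˣ) ^ l.length • ((l.map e).prod * e j) := by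
  induction l with
  | nil => simp
  | cons a l ih =>
    rw [List.mem_cons, not_or] at hj
    simp only [List.map_cons, List.prod_cons, List.length_cons, pow_succ, mul_neg_one,
      Units.neg_smul]
    rw [← mul_assoc, hanti j a hj.1, neg_mul, mul_assoc, ih hj.2, mul_smul_comm, mul_assoc]

variable {n : ℕ}

lemma length_filter_finRange_mem (s : Finset (Fin n)) :
    ((List.finRange n).filter (· ∈ s)).length = #s := by
  rw [← List.toFinset_card_of_nodup ((List.nodup_finRange n).filter _)]
  congr 1
  ext i
  simp

def cliffordMonomial (e : Fin n → A) (s : Finset (Fin n)) : A :=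
  (((List.finRange n).filter (· ∈ s)).map e).prod

variable (e : Fin n → A)

@[simp]
lemma cliffordMonomial_empty : cliffordMonomial e ∅ = 1 := by
  simp [cliffordMonomial]

lemma cliffordMonomial_univ : cliffordMonomial e univ = ((List.finRange n).map e).prod := by
  simp [cliffordMonomial]

variable {e}

lemma cliffordMonomial_insert (he : IsAnticommutingInvolutions e) {j : Fin n}
    {s : Finset (Fin n)} (hj : j ∉ s) :
    ∃ ε : ℤˣ, cliffordMonomial e (insert j s) = ε • (e j * cliffordMonomial e s) := by
  obtain ⟨u, v, huv⟩ := List.append_of_mem (List.mem_finRange j)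
  have hnd : (u ++ j :: v).Nodup := huv ▸ List.nodup_finRange n
  have hju : j ∉ u := fun h => List.disjoint_of_nodup_append hnd h List.mem_cons_self
  have hjv : j ∉ v := (List.nodup_cons.mp (List.Nodup.of_append_right hnd)).1
  have hfilter : ∀ w : List (Fin n), j ∉ w → w.filter (· ∈ insert j s) = w.filter (· ∈ s) :=
    fun w hw => List.filter_congr fun x hx => by
      simp [show x ≠ j from fun h => hw (h ▸ hx)]
  have hu := mul_list_prod_map_of_notMem he.anticomm
    (fun h => hju (List.mem_filter.mp h).1 : j ∉ u.filter (· ∈ s))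
  refine ⟨(-1) ^ (u.filter (· ∈ s)).length, ?_⟩
  simp only [cliffordMonomial, huv, List.filter_append, List.filter_cons, hfilter u hju,
    hfilter v hjv, mem_insert_self, hj, decide_true, decide_false, if_true, Bool.false_eq_true,
    if_false, List.map_append, List.map_cons, List.prod_append, List.prod_cons]
  rw [← mul_assoc, ← mul_assoc, hu, smul_mul_assoc, smul_smul, Int.units_mul_self, one_smul]

lemma mul_cliffordMonomial_eq_smul_mul (he : IsAnticommutingInvolutions e) (k : Fin n)
    (s : Finset (Fin n)) :
    e k * cliffordMonomial e s = (-1 : ℤˣ) ^ #(s.erase k) • (cliffordMonomial e s * e k) := by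
  have hnotMem : ∀ t : Finset (Fin n), k ∉ t →
      e k * cliffordMonomial e t = (-1 : ℤˣ) ^ #t • (cliffordMonomial e t * e k) := by
    intro t hk
    rw [← length_filter_finRange_mem t]
    exact mul_list_prod_map_of_notMem he.anticomm (by simpa using hk)
  by_cases hk : k ∈ s
  · have hk' : k ∉ s.erase k := notMem_erase k s
    obtain ⟨ε, hε⟩ := cliffordMonomial_insert he hk'
    rw [insert_erase hk] at hε
    have hcomm : cliffordMonomial e (s.erase k) * e k =
        (-1 : ℤˣ) ^ #(s.erase k) • (e k * cliffordMonomial e (s.erase k)) := by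
      rw [hnotMem _ hk', smul_smul, Int.units_mul_self, one_smul]
    -- both sides reduce to `± e_{s.erase k}` after cancelling `e k * e k`
    rw [hε, mul_smul_comm, ← mul_assoc, he.mul_self, one_mul, smul_mul_assoc, mul_assoc, hcomm,
      mul_smul_comm, ← mul_assoc, he.mul_self, one_mul, smul_smul, smul_smul,
      mul_comm _ ε, mul_assoc, Int.units_mul_self, mul_one]
  · rw [erase_eq_of_notMem hk]
    exact hnotMem s hk

lemma mul_cliffordMonomial (he : IsAnticommutingInvolutions e) (j : Fin n)
    (s : Finset (Fin n)) :
    ∃ ε : ℤˣ, e j * cliffordMonomial e s = ε • cliffordMonomial e ({j} ∆ s) := by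
  by_cases hj : j ∈ s
  · obtain ⟨ε, hε⟩ := cliffordMonomial_insert he (notMem_erase j s)
    rw [insert_erase hj] at hε
    refine ⟨ε, ?_⟩
    rw [hε, mul_smul_comm, ← mul_assoc, he.mul_self, one_mul, singleton_symmDiff_of_mem hj]
  · obtain ⟨ε, hε⟩ := cliffordMonomial_insert he hj
    refine ⟨ε, ?_⟩
    rw [singleton_symmDiff_of_notMem hj, hε, smul_smul, Int.units_mul_self, one_smul]

lemma cliffordMonomial_mul (he : IsAnticommutingInvolutions e) (s t : Finset (Fin n)) :
    ∃ ε : ℤˣ, cliffordMonomial e s * cliffordMonomial e t = ε • cliffordMonomial e (s ∆ t) := by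
  induction s using Finset.induction_on with
  | empty =>
    exact ⟨1, by rw [one_smul, cliffordMonomial_empty, one_mul, ← bot_eq_empty, bot_symmDiff]⟩
  | insert j s hj ih =>
    obtain ⟨ε₁, h₁⟩ := cliffordMonomial_insert he hj
    obtain ⟨ε₂, h₂⟩ := ih
    obtain ⟨ε₃, h₃⟩ := mul_cliffordMonomial he j (s ∆ t)
    refine ⟨ε₁ * ε₂ * ε₃, ?_⟩
    rw [h₁, smul_mul_assoc, mul_assoc, h₂, mul_smul_comm, h₃, ← singleton_symmDiff_of_notMem hj,
      symmDiff_assoc, smul_smul, smul_smul]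

lemma cliffordMonomial_mul_self (he : IsAnticommutingInvolutions e) (s : Finset (Fin n)) :
    ∃ ε : ℤˣ, cliffordMonomial e s * cliffordMonomial e s = ε • 1 := by
  obtain ⟨ε, hε⟩ := cliffordMonomial_mul he s s
  exact ⟨ε, by rw [hε, symmDiff_self, bot_eq_empty, cliffordMonomial_empty]⟩

end Ring

lemma LinearMap.BilinForm.exists_eq_smul_of_orthogonal_basis {ι K M : Type*} [Fintype ι]
    [Field K] [AddCommGroup M] [Module K M] {B : LinearMap.BilinForm K M} {b : Basis ι K M}
    (hb : ∀ i j, i ≠ j → B (b i) (b j) = 0) (hdiag : ∀ i, B (b i) (b i) ≠ 0) {x : M} {i₀ : ι}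
    (hx : ∀ i ≠ i₀, B x (b i) = 0) : ∃ c : K, x = c • b i₀ := by
  have hB : ∀ i, B x (b i) = b.repr x i * B (b i) (b i) := by
    intro i
    conv_lhs => rw [← b.sum_repr x]
    rw [map_sum, LinearMap.sum_apply, Finset.sum_eq_single i
      (fun j _ hj => by rw [map_smul, LinearMap.smul_apply, hb j i hj, smul_zero]) (by simp),
      map_smul, LinearMap.smul_apply, smul_eq_mul]
  refine ⟨b.repr x i₀, ?_⟩
  conv_lhs => rw [← b.sum_repr x]
  refine Finset.sum_eq_single i₀ (fun i _ hi => ?_) (by simp)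
  rw [(mul_eq_zero.mp ((hB i).symm.trans (hx i hi))).resolve_right (hdiag i), zero_smul]

section End

variable {K V : Type*} [Field K] [AddCommGroup V] [Module K V]

variable (K V) in
noncomputable def traceMulForm : LinearMap.BilinForm K (Module.End K V) :=
  (LinearMap.mul K (Module.End K V)).compr₂ (LinearMap.trace K V)

@[simp]
lemma traceMulForm_apply (f g : Module.End K V) :
    traceMulForm K V f g = LinearMap.trace K V (f * g) := rfl

lemma LinearMap.trace_eq_zero_of_mul_eq_neg_mul [CharZero K] {f g : Module.End K V}
    (hg : g * g = 1) (h : g * f = -(f * g)) : LinearMap.trace K V f = 0 := by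
  refine self_eq_neg.mp ?_
  calc trace K V f = trace K V (g * (g * f)) := by rw [← mul_assoc, hg, one_mul]
    _ = trace K V (g * f * g) := trace_mul_comm K _ _
    _ = -trace K V (f * (g * g)) := by rw [h, neg_mul, map_neg, mul_assoc]
    _ = -trace K V f := by rw [hg, mul_one]

variable {n : ℕ} {e : Fin n → Module.End K V}

lemma trace_cliffordMonomial_eq_zero [CharZero K] (he : IsAnticommutingInvolutions e)
    {s : Finset (Fin n)} (hs : s.Nonempty) (hs' : s ≠ univ) :
    LinearMap.trace K V (cliffordMonomial e s) = 0 := by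
  obtain ⟨k, hk⟩ : ∃ k, Odd #(s.erase k) := by
    rcases Nat.even_or_odd #s with h | h
    · obtain ⟨k, hk⟩ := hs
      rw [← card_erase_add_one hk, Nat.even_add_one, Nat.not_even_iff_odd] at h
      exact ⟨k, h⟩
    · obtain ⟨k, hk⟩ := not_forall.mp (mt eq_univ_of_forall hs')
      exact ⟨k, by rwa [erase_eq_of_notMem hk]⟩
  apply LinearMap.trace_eq_zero_of_mul_eq_neg_mul (he.mul_self k)
  rw [mul_cliffordMonomial_eq_smul_mul he, hk.neg_one_pow, Units.neg_smul, one_smul]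

lemma traceMulForm_cliffordMonomial_eq_zero [CharZero K] (he : IsAnticommutingInvolutions e)
    {s t : Finset (Fin n)} (hst : s ≠ t) (hst' : s ∆ t ≠ univ) :
    traceMulForm K V (cliffordMonomial e s) (cliffordMonomial e t) = 0 := by
  obtain ⟨ε, hε⟩ := cliffordMonomial_mul he s t
  rw [traceMulForm_apply, hε, Units.smul_def, map_zsmul,
    trace_cliffordMonomial_eq_zero he (symmDiff_nonempty.mpr hst) hst', smul_zero]

lemma traceMulForm_cliffordMonomial_self_ne_zero [CharZero K] [FiniteDimensional K V]
    [Nontrivial V] (he : IsAnticommutingInvolutions e) (s : Finset (Fin n)) :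
    traceMulForm K V (cliffordMonomial e s) (cliffordMonomial e s) ≠ 0 := by
  obtain ⟨ε, hε⟩ := cliffordMonomial_mul_self he s
  rw [traceMulForm_apply, hε, Units.smul_def, map_zsmul, LinearMap.trace_one]
  exact smul_ne_zero (Units.ne_zero ε) (Nat.cast_ne_zero.mpr finrank_pos.ne')

end End

section ImageSucc

variable {K V : Type*} [Field K] [AddCommGroup V] [Module K V] {m : ℕ}
  {e : Fin (m + 1) → Module.End K V}

lemma traceMulForm_cliffordMonomial_image_succ_eq_zero [CharZero K]
    (he : IsAnticommutingInvolutions e) {s t : Finset (Fin m)} (hst : s ≠ t) :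
    traceMulForm K V (cliffordMonomial e (s.image Fin.succ))
      (cliffordMonomial e (t.image Fin.succ)) = 0 := by
  refine traceMulForm_cliffordMonomial_eq_zero he
    ((image_injective (Fin.succ_injective m)).ne hst) fun h => ?_
  have h0 := h ▸ mem_univ 0
  rw [← image_symmDiff _ _ (Fin.succ_injective m)] at h0
  simp [Fin.succ_ne_zero] at h0

lemma linearIndependent_cliffordMonomial_image_succ [CharZero K] [FiniteDimensional K V]
    [Nontrivial V] (he : IsAnticommutingInvolutions e) :
    LinearIndependent K fun s : Finset (Fin m) => cliffordMonomial e (s.image Fin.succ) :=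
  LinearMap.linearIndependent_of_isOrthoᵢ
    (fun _ _ hst => traceMulForm_cliffordMonomial_image_succ_eq_zero he hst)
    (fun _ => traceMulForm_cliffordMonomial_self_ne_zero he _)

lemma exists_cliffordMonomial_univ_eq_smul_one [CharZero K] [FiniteDimensional K V]
    [Nontrivial V] (he : IsAnticommutingInvolutions e) (hdim : finrank K V ^ 2 = 2 ^ m) :
    ∃ c : K, cliffordMonomial e univ = c • 1 := by
  let b := basisOfLinearIndependentOfCardEqFinrank
    (linearIndependent_cliffordMonomial_image_succ he)
    (by rw [Fintype.card_finset, Fintype.card_fin, finrank_linearMap, ← sq, hdim])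
  have hb : ∀ s, b s = cliffordMonomial e (s.image Fin.succ) :=
    congrFun (coe_basisOfLinearIndependentOfCardEqFinrank _ _)
  have hω := LinearMap.BilinForm.exists_eq_smul_of_orthogonal_basis (b := b) (i₀ := ∅)
    (fun s t hst => by rw [hb, hb]; exact traceMulForm_cliffordMonomial_image_succ_eq_zero he hst)
    (fun s => by rw [hb]; exact traceMulForm_cliffordMonomial_self_ne_zero he _)
    (x := cliffordMonomial e univ) fun t ht => by
      obtain ⟨k, hk⟩ := nonempty_iff_ne_empty.mpr ht
      rw [hb]
      refine traceMulForm_cliffordMonomial_eq_zero he (fun h => ?_) fun h => ?_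
      · have h0 := h ▸ mem_univ 0
        simp [Fin.succ_ne_zero] at h0
      · have hk' := h ▸ mem_univ k.succ
        simp [mem_symmDiff, hk] at hk'
  simpa [hb] using hω

end ImageSucc

theorem list_prod_map_eq_one_or_neg_one {K V : Type*} [Field K] [LinearOrder K]
    [IsStrictOrderedRing K] [AddCommGroup V] [Module K V] [FiniteDimensional K V] {m : ℕ}
    {e : Fin (m + 1) → Module.End K V} (he : IsAnticommutingInvolutions e)
    (hdim : finrank K V ^ 2 = 2 ^ m) :
    ((List.finRange (m + 1)).map e).prod = 1 ∨ ((List.finRange (m + 1)).map e).prod = -1 := by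
  have : Nontrivial V := Module.nontrivial_of_finrank_pos <| Nat.pos_of_ne_zero <|
    ne_zero_pow two_ne_zero (hdim ▸ pow_ne_zero m two_ne_zero)
  obtain ⟨c, hc⟩ := exists_cliffordMonomial_univ_eq_smul_one he hdim
  obtain ⟨ε, hε⟩ := cliffordMonomial_mul_self he univ
  rw [hc, smul_mul_smul, one_mul, Units.smul_def, ← Int.cast_smul_eq_zsmul K] at hε
  have hcc : c * c = ε := smul_left_injective K one_ne_zero hε
  rw [cliffordMonomial_univ] at hc
  rcases Int.units_eq_one_or ε with rfl | rfl
  · rcases mul_self_eq_one_iff.mp (by simpa using hcc) with rfl | rfl <;> simp [hc]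
  · nlinarith [mul_self_nonneg c, show c * c = -1 by simpa using hcc]

theorem stmt5_general (S : Fin 9 → (E16 →ₗ[ℝ] E16))
    (hcl : ∀ i j, S i * S j + S j * S i =
      if i = j then (2 : ℝ) • (1 : E16 →ₗ[ℝ] E16) else 0) :
    ((List.finRange 9).map S).prod = 1 ∨ ((List.finRange 9).map S).prod = -1 :=
  list_prod_map_eq_one_or_neg_one (isAnticommutingInvolutions_of_mul_add_mul hcl)
    (by rw [finrank_euclideanSpace_fin]; norm_num)

/-- For a `Cl⁺(9)`-system `S₀,…,S₈` on `ℝ¹⁶`, the product `S₀S₁⋯S₈` is `id` or `−id`. -/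
theorem stmt5 (S : Fin 9 → (E16 →ₗ[ℝ] E16))
    (hsymm : ∀ i, LinearMap.adjoint (S i) = S i)
    (hcl : ∀ i j, S i * S j + S j * S i =
      if i = j then (2 : ℝ) • (1 : E16 →ₗ[ℝ] E16) else 0) :
    ((List.finRange 9).map S).prod = 1 ∨ ((List.finRange 9).map S).prod = -1 :=
  stmt5_general S hcl
end

section
/- Let S_0, …, S_8 be a Cl⁺(9)-system on ℝ^16. Then: (i) L_{9−k} = L_k for 0 ≤ k ≤ 9; (ii) the operators (1/4)·S_{i_1}···S_{i_k}, taken over all 0 ≤ k ≤ 4 and all i_1 < ··· < i_k, form an orthonormal basis of End(ℝ^16) with respect to the trace inner product, so End(ℝ^16) = L_0 ⊕ L_1 ⊕ L_2 ⊕ L_3 ⊕ L_4 (orthogonal direct sum); (iii) the space Sym(ℝ^16) of symmetric endomorphisms equals L_0 ⊕ L_1 ⊕ L_4 and the space Skew(ℝ^16) of skew-symmetric endomorphisms equals L_2 ⊕ L_3, both orthogonal direct sums. -/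
variable {ι R A : Type*}

theorem List.countP_ne_add_count [DecidableEq ι] (l : List ι) (j : ι) :
    l.countP (· ≠ j) + l.count j = l.length := by
  induction l with
  | nil => rfl
  | cons a t ih => by_cases h : a = j <;> simp [h, ← ih] <;> omega

theorem List.exists_odd_countP_append_ne [Fintype ι] [DecidableEq ι] {l₁ l₂ : List ι}
    (h₁ : l₁.Nodup) (h₂ : l₂.Nodup) (hne : ¬ l₁.Perm l₂)
    (hlen : l₁.length + l₂.length < Fintype.card ι) :
    ∃ j, Odd ((l₁ ++ l₂).countP (· ≠ j)) := by
  have hcount (j : ι) : (l₁ ++ l₂).countP (· ≠ j) + (l₁.count j + l₂.count j) =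
      l₁.length + l₂.length := by
    rw [← List.count_append, List.countP_ne_add_count, List.length_append]
  rcases Nat.even_or_odd (l₁.length + l₂.length) with heven | hodd
  · -- an index occurring in exactly one of the two lists
    obtain ⟨j, hj⟩ : ∃ j, ¬ (j ∈ l₁ ↔ j ∈ l₂) := by
      simpa [List.perm_ext_iff_of_nodup h₁ h₂] using hne
    refine ⟨j, ?_⟩
    have hj1 : l₁.count j + l₂.count j = 1 := by
      by_cases hj₁ : j ∈ l₁
      · rw [List.count_eq_one_of_mem h₁ hj₁, List.count_eq_zero_of_not_mem (by tauto)]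
      · rw [List.count_eq_zero_of_not_mem hj₁, List.count_eq_one_of_mem h₂ (by tauto)]
    have := hcount j
    rw [hj1] at this
    grind
  · -- an index occurring in neither list
    obtain ⟨j, -, hj⟩ := Finset.exists_mem_notMem_of_card_lt_card
      (s := l₁.toFinset ∪ l₂.toFinset) (t := Finset.univ) (by
        calc _ ≤ l₁.toFinset.card + l₂.toFinset.card := Finset.card_union_le _ _
          _ ≤ l₁.length + l₂.length := add_le_add l₁.toFinset_card_le l₂.toFinset_card_le
          _ < _ := by rwa [Finset.card_univ])
    simp only [Finset.mem_union, List.mem_toFinset, not_or] at hj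
    refine ⟨j, ?_⟩
    have := hcount j
    rw [List.count_eq_zero_of_not_mem hj.1, List.count_eq_zero_of_not_mem hj.2] at this
    grind

theorem Fintype.card_finset_card_le (α : Type*) [Fintype α] (m : ℕ) :
    Fintype.card {s : Finset α // s.card ≤ m} =
      ∑ k ∈ Finset.range (m + 1), (Fintype.card α).choose k := by
  classical
  rw [Fintype.card_subtype, Finset.card_eq_sum_card_fiberwise (f := Finset.card)
    (t := Finset.range (m + 1)) (fun s hs => by simp at hs ⊢; omega)]
  refine Finset.sum_congr rfl fun k hk => ?_
  rw [Finset.mem_range] at hk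
  rw [← Fintype.card_finset_len, Fintype.card_subtype, Finset.filter_filter]
  congr 1
  ext s
  simp only [Finset.mem_filter, Finset.mem_univ, true_and]
  omega

theorem star_list_prod_map [Monoid A] [StarMul A] {e : ι → A} (he : ∀ i, IsSelfAdjoint (e i))
    (l : List ι) : star (l.map e).prod = (l.reverse.map e).prod := by
  induction l with
  | nil => simp
  | cons a t ih => simp [ih, (he a).star_eq]

theorem eq_selfAdjoint_and_eq_skewAdjoint_of_sup_eq_top [Ring R] [StarMul R] [TrivialStar R]
    [Invertible (2 : R)] [AddCommGroup A] [Module R A] [StarAddMonoid A] [StarModule R A]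
    {p q : Submodule R A} (hp : p ≤ selfAdjoint.submodule R A)
    (hq : q ≤ skewAdjoint.submodule R A) (htop : p ⊔ q = ⊤) :
    p = selfAdjoint.submodule R A ∧ q = skewAdjoint.submodule R A := by
  have hzero (x : A) (hs : x ∈ selfAdjoint.submodule R A) (ha : x ∈ skewAdjoint.submodule R A) :
      x = 0 := by
    have hx : x = -x := (selfAdjoint.mem_iff.1 hs).symm.trans (skewAdjoint.mem_iff.1 ha)
    calc x = ⅟2 • x + ⅟2 • x := (invOf_two_smul_add_invOf_two_smul R x).symm
      _ = 0 := by rw [← smul_add]; nth_rw 2 [hx]; rw [add_neg_cancel, smul_zero]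
  have hdecomp (x : A) : ∃ y ∈ p, ∃ z ∈ q, y + z = x :=
    Submodule.mem_sup.1 (htop ▸ Submodule.mem_top)
  refine ⟨le_antisymm hp fun x hx => ?_, le_antisymm hq fun x hx => ?_⟩
  · obtain ⟨y, hy, z, hz, rfl⟩ := hdecomp x
    have hz0 : z = 0 := hzero z (by simpa using sub_mem hx (hp hy)) (hq hz)
    simpa [hz0] using hy
  · obtain ⟨y, hy, z, hz, rfl⟩ := hdecomp x
    have hy0 : y = 0 := hzero y (hp hy) (by simpa using sub_mem hx (hq hz))
    simpa [hy0] using hz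

section ProdSpan

variable (R) [CommSemiring R] [Semiring A] [Algebra R A] [LinearOrder ι]

/-- The paper's `L_k`. -/
def prodSpan (e : ι → A) (k : ℕ) : Submodule R A :=
  Submodule.span R {P | ∃ l : List ι, l.Pairwise (· < ·) ∧ l.length = k ∧ P = (l.map e).prod}

variable {R}

theorem prod_mem_prodSpan (e : ι → A) {l : List ι} (hl : l.Pairwise (· < ·)) :
    (l.map e).prod ∈ prodSpan R e l.length :=
  Submodule.subset_span ⟨l, hl, rfl, rfl⟩

theorem prodSpan_le_adjoin (e : ι → A) (k : ℕ) :
    prodSpan R e k ≤ Subalgebra.toSubmodule (Algebra.adjoin R (Set.range e)) := by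
  rw [prodSpan, Submodule.span_le]
  rintro _ ⟨l, -, -, rfl⟩
  exact Subalgebra.list_prod_mem _ fun x hx => by
    obtain ⟨i, -, rfl⟩ := List.mem_map.1 hx
    exact Algebra.subset_adjoin ⟨i, rfl⟩

end ProdSpan

structure IsCliffordSystem [Ring A] (e : ι → A) : Prop where
  mul_self : ∀ i, e i * e i = 1
  anticomm : ∀ ⦃i j⦄, i ≠ j → e i * e j = -(e j * e i)

theorem IsCliffordSystem.of_anticommutator_eq [Field R] [NeZero (2 : R)] [Ring A] [Algebra R A]
    [DecidableEq ι] {e : ι → A}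
    (h : ∀ i j, e i * e j + e j * e i = if i = j then (2 : R) • (1 : A) else 0) :
    IsCliffordSystem e where
  mul_self i := by
    have hi := h i i
    rw [if_pos rfl, ← two_smul R] at hi
    exact smul_right_injective A two_ne_zero hi
  anticomm i j hij := eq_neg_of_add_eq_zero_left (by simpa [hij] using h i j)

namespace IsCliffordSystem

section Ring

variable [Ring A] {e : ι → A} (he : IsCliffordSystem e)
include he

theorem prod_mul_eq_neg_one_pow_zsmul [DecidableEq ι] (l : List ι) (j : ι) :
    (l.map e).prod * e j = (-1 : ℤ) ^ l.countP (· ≠ j) • (e j * (l.map e).prod) := by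
  induction l with
  | nil => simp
  | cons a t ih =>
    rw [List.map_cons, List.prod_cons, mul_assoc, ih, mul_smul_comm, ← mul_assoc]
    by_cases haj : a = j
    · subst haj
      simp [mul_assoc]
    · rw [he.anticomm haj, List.countP_cons_of_pos (by simpa using haj), pow_succ, mul_comm,
        mul_smul, neg_one_zsmul, neg_mul, mul_assoc, smul_neg]

theorem exists_prod_eq_of_perm {l₁ l₂ : List ι} (h : l₁.Perm l₂) :
    ∃ n : ℕ, (l₁.map e).prod = (-1 : ℤ) ^ n • (l₂.map e).prod := by
  induction h with
  | nil => exact ⟨0, by simp⟩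
  | cons x _ ih =>
    obtain ⟨n, hn⟩ := ih
    exact ⟨n, by simp only [List.map_cons, List.prod_cons, hn, mul_smul_comm]⟩
  | swap x y l =>
    by_cases hxy : x = y
    · subst hxy
      exact ⟨0, by simp⟩
    · exact ⟨1, by simp [← mul_assoc, he.anticomm (Ne.symm hxy)]⟩
  | trans _ _ ih₁ ih₂ =>
    obtain ⟨m, hm⟩ := ih₁
    obtain ⟨n, hn⟩ := ih₂
    exact ⟨m + n, by rw [hm, hn, smul_smul, pow_add]⟩

theorem prod_mul_prod_reverse (l : List ι) :
    (l.map e).prod * (l.reverse.map e).prod = 1 := by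
  induction l with
  | nil => simp
  | cons a t ih =>
    simp only [List.map_cons, List.prod_cons, List.reverse_cons, List.map_append, List.prod_append,
      List.map_nil, List.prod_nil, mul_one]
    calc e a * (t.map e).prod * ((t.reverse.map e).prod * e a)
        = e a * ((t.map e).prod * (t.reverse.map e).prod) * e a := by simp only [mul_assoc]
      _ = 1 := by rw [ih, mul_one, he.mul_self]

theorem prod_reverse {l : List ι} (hl : l.Nodup) :
    (l.reverse.map e).prod = (-1 : ℤ) ^ l.length.choose 2 • (l.map e).prod := by
  classical
  induction l with
  | nil => simp
  | cons a t ih =>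
    obtain ⟨ha, ht⟩ := List.nodup_cons.1 hl
    have hcount : t.countP (· ≠ a) = t.length :=
      List.countP_eq_length.2 fun b hb => by simpa using ne_of_mem_of_not_mem hb ha
    simp only [List.reverse_cons, List.map_append, List.prod_append, List.map_cons, List.map_nil,
      List.prod_cons, List.prod_nil, mul_one, ih ht, smul_mul_assoc,
      he.prod_mul_eq_neg_one_pow_zsmul, hcount, smul_smul, List.length_cons, Nat.choose_succ_succ,
      Nat.choose_one_right, pow_add, mul_comm]

theorem commute_prod [DecidableEq ι] {l : List ι} (hl : l.Nodup) (hodd : Odd l.length) {j : ι}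
    (hj : j ∈ l) : Commute (l.map e).prod (e j) := by
  have hcount : l.countP (· ≠ j) + 1 = l.length := by
    rw [← List.count_eq_one_of_mem hl hj, List.countP_ne_add_count]
  rw [Commute, SemiconjBy, he.prod_mul_eq_neg_one_pow_zsmul, Even.neg_one_pow (by grind),
    one_smul]

end Ring

section Trace

variable {K V : Type*} [Field K] [AddCommGroup V] [Module K V]
  {e : ι → Module.End K V} (he : IsCliffordSystem e)
include he

theorem trace_prod_eq_zero [NeZero (2 : K)] [DecidableEq ι] {l : List ι} {j : ι}
    (hj : Odd (l.countP (· ≠ j))) : LinearMap.trace K V (l.map e).prod = 0 := by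
  set P := (l.map e).prod
  have hanti : P * e j = -(e j * P) := by
    rw [he.prod_mul_eq_neg_one_pow_zsmul, hj.neg_one_pow, neg_one_zsmul]
  have h : LinearMap.trace K V P = -LinearMap.trace K V P := calc
    LinearMap.trace K V P = LinearMap.trace K V (e j * (P * e j)) := by
      rw [LinearMap.trace_mul_comm, mul_assoc, he.mul_self, mul_one]
    _ = -LinearMap.trace K V P := by
      rw [hanti, mul_neg, ← mul_assoc, he.mul_self, one_mul, map_neg]
  have h2 : (2 : K) * LinearMap.trace K V P = 0 := by
    rw [two_mul]; nth_rewrite 1 [h]; exact neg_add_cancel _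
  exact (mul_eq_zero.1 h2).resolve_left two_ne_zero

theorem trace_prod_mul_prod_reverse [FiniteDimensional K V] [NeZero (2 : K)] [LinearOrder ι]
    [Fintype ι] {l₁ l₂ : List ι} (h₁ : l₁.Pairwise (· < ·)) (h₂ : l₂.Pairwise (· < ·))
    (hlen : l₁.length + l₂.length < Fintype.card ι) :
    LinearMap.trace K V ((l₁.map e).prod * (l₂.reverse.map e).prod) =
      if l₁ = l₂ then (Module.finrank K V : K) else 0 := by
  split_ifs with h
  · rw [h, he.prod_mul_prod_reverse, LinearMap.trace_one]
  · have hne : ¬ l₁.Perm l₂.reverse := fun hp =>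
      h ((hp.trans (List.reverse_perm _)).eq_of_pairwise' (h₁.imp le_of_lt) (h₂.imp le_of_lt))
    obtain ⟨j, hj⟩ := List.exists_odd_countP_append_ne h₁.nodup
      (List.nodup_reverse.2 h₂.nodup) hne (by rwa [List.length_reverse])
    rw [← List.prod_append, ← List.map_append, he.trace_prod_eq_zero hj]

end Trace

section Star

variable [CommRing R] [StarRing R] [TrivialStar R] [Ring A] [StarRing A] [Algebra R A]
  [StarModule R A] [LinearOrder ι] {e : ι → A} (he : IsCliffordSystem e)
  (hsa : ∀ i, IsSelfAdjoint (e i))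
include he hsa

theorem star_prod {l : List ι} (hl : l.Pairwise (· < ·)) :
    star (l.map e).prod = (-1 : ℤ) ^ l.length.choose 2 • (l.map e).prod := by
  rw [star_list_prod_map hsa, he.prod_reverse hl.nodup]

theorem prodSpan_le_selfAdjoint {k : ℕ} (hk : Even (k.choose 2)) :
    prodSpan R e k ≤ selfAdjoint.submodule R A := by
  rw [prodSpan, Submodule.span_le]
  rintro _ ⟨l, hl, rfl, rfl⟩
  exact (he.star_prod hsa hl).trans (by rw [hk.neg_one_pow, one_smul])

theorem prodSpan_le_skewAdjoint {k : ℕ} (hk : Odd (k.choose 2)) :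
    prodSpan R e k ≤ skewAdjoint.submodule R A := by
  rw [prodSpan, Submodule.span_le]
  rintro _ ⟨l, hl, rfl, rfl⟩
  exact (he.star_prod hsa hl).trans (by rw [hk.neg_one_pow, neg_one_zsmul])

theorem sup_prodSpan_eq_selfAdjoint_and_eq_skewAdjoint [Invertible (2 : R)]
    (htop :
      prodSpan R e 0 ⊔ prodSpan R e 1 ⊔ prodSpan R e 2 ⊔ prodSpan R e 3 ⊔ prodSpan R e 4 = ⊤) :
    prodSpan R e 0 ⊔ prodSpan R e 1 ⊔ prodSpan R e 4 = selfAdjoint.submodule R A ∧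
      prodSpan R e 2 ⊔ prodSpan R e 3 = skewAdjoint.submodule R A :=
  eq_selfAdjoint_and_eq_skewAdjoint_of_sup_eq_top
    (sup_le (sup_le (he.prodSpan_le_selfAdjoint hsa (by decide))
      (he.prodSpan_le_selfAdjoint hsa (by decide))) (he.prodSpan_le_selfAdjoint hsa (by decide)))
    (sup_le (he.prodSpan_le_skewAdjoint hsa (by decide))
      (he.prodSpan_le_skewAdjoint hsa (by decide)))
    (by rw [← htop]; order)

end Star

section Complement

variable [CommRing R] [Ring A] [Algebra R A] {n : ℕ} {e : Fin n → A} (he : IsCliffordSystem e)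
include he

theorem prod_finRange_mem_bot [Algebra.IsCentral R A] (hn : Odd n)
    (htop : Algebra.adjoin R (Set.range e) = ⊤) :
    ((List.finRange n).map e).prod ∈ (⊥ : Subalgebra R A) := by
  rw [← Algebra.IsCentral.center_eq_bot, Subalgebra.mem_center_iff]
  intro b
  have hle : Algebra.adjoin R (Set.range e) ≤
      Subalgebra.centralizer R {((List.finRange n).map e).prod} := by
    refine Algebra.adjoin_le ?_
    rintro _ ⟨j, rfl⟩
    rw [SetLike.mem_coe, Subalgebra.mem_centralizer_iff]
    rintro _ rfl
    exact he.commute_prod (List.nodup_finRange n) (by rwa [List.length_finRange])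
      (List.mem_finRange j)
  have hb := hle (htop ▸ Algebra.mem_top : b ∈ Algebra.adjoin R (Set.range e))
  exact ((Subalgebra.mem_centralizer_iff R).1 hb _ rfl).symm

theorem prodSpan_sub_le (hω : ((List.finRange n).map e).prod ∈ (⊥ : Subalgebra R A)) {k : ℕ}
    (hk : k ≤ n) : prodSpan R e (n - k) ≤ prodSpan R e k := by
  obtain ⟨c, hc⟩ := Algebra.mem_bot.1 hω
  rw [prodSpan, Submodule.span_le]
  rintro _ ⟨l, hl, hlen, rfl⟩
  set l' := (List.finRange n).filter (· ∉ l)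
  have hl' : l'.Pairwise (· < ·) := (List.pairwise_lt_finRange n).filter _
  have hperm : (l ++ l').Perm (List.finRange n) := by
    rw [List.perm_ext_iff_of_nodup ?_ (List.nodup_finRange n)]
    · intro j; by_cases j ∈ l <;> simp [l', *]
    · exact List.nodup_append.2 ⟨hl.nodup, hl'.nodup, by simp only [l', List.mem_filter]; grind⟩
  have hlen' : l'.length = k := by
    have := hperm.length_eq
    rw [List.length_append, List.length_finRange, hlen] at this
    omega
  obtain ⟨m, hm⟩ := he.exists_prod_eq_of_perm hperm
  obtain ⟨m', hm'⟩ := he.exists_prod_eq_of_perm (List.reverse_perm l')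
  -- `e_l = (e_l e_{l'}) e_{reverse l'}`, and `e_l e_{l'} = ±ω` is a scalar
  have : (l.map e).prod = (-1 : ℤ) ^ (m + m') • c • (l'.map e).prod := by
    calc (l.map e).prod = ((l ++ l').map e).prod * (l'.reverse.map e).prod := by
          rw [List.map_append, List.prod_append, mul_assoc, he.prod_mul_prod_reverse, mul_one]
      _ = _ := by
          rw [hm, hm', ← hc, Algebra.algebraMap_eq_smul_one, smul_mul_assoc, smul_mul_assoc,
            one_mul, smul_comm c ((-1 : ℤ) ^ m'), smul_smul, pow_add]
  rw [this, ← hlen']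
  exact Submodule.smul_of_tower_mem _ _ (Submodule.smul_mem _ _ (prod_mem_prodSpan e hl'))

end Complement

end IsCliffordSystem

section TraceForm

variable (V : Type*) [NormedAddCommGroup V] [InnerProductSpace ℝ V] [FiniteDimensional ℝ V]

noncomputable def traceForm : LinearMap.BilinForm ℝ (V →ₗ[ℝ] V) :=
  LinearMap.mk₂ ℝ (fun P Q => LinearMap.trace ℝ V (P * LinearMap.adjoint Q))
    (fun _ _ _ => by rw [add_mul, map_add]) (fun _ _ _ => by rw [smul_mul_assoc, map_smul])
    (fun _ _ _ => by rw [map_add, mul_add, map_add]) (fun _ _ _ => by simp)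

theorem traceForm_apply (P Q : V →ₗ[ℝ] V) :
    traceForm V P Q = LinearMap.trace ℝ V (P * LinearMap.adjoint Q) :=
  rfl

variable {V} [LinearOrder ι] [Fintype ι] {e : ι → V →ₗ[ℝ] V} (he : IsCliffordSystem e)
  (hsa : ∀ i, IsSelfAdjoint (e i))
include he hsa

theorem IsCliffordSystem.traceForm_prod {l₁ l₂ : List ι} (h₁ : l₁.Pairwise (· < ·))
    (h₂ : l₂.Pairwise (· < ·)) (hlen : l₁.length + l₂.length < Fintype.card ι) :
    traceForm V (l₁.map e).prod (l₂.map e).prod =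
      if l₁ = l₂ then (Module.finrank ℝ V : ℝ) else 0 := by
  rw [traceForm_apply, ← LinearMap.star_eq_adjoint, star_list_prod_map hsa,
    he.trace_prod_mul_prod_reverse h₁ h₂ hlen]

theorem IsCliffordSystem.traceForm_eq_zero {k k' : ℕ} (hkk' : k ≠ k')
    (hlen : k + k' < Fintype.card ι) {P Q : V →ₗ[ℝ] V} (hP : P ∈ prodSpan ℝ e k)
    (hQ : Q ∈ prodSpan ℝ e k') : traceForm V P Q = 0 := by
  have h := Submodule.apply_mem_map₂ (traceForm V) hP hQ
  rwa [prodSpan, prodSpan, Submodule.map₂_span_span, Submodule.span_eq_bot.2,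
    Submodule.mem_bot] at h
  rintro _ ⟨_, ⟨l₁, h₁, rfl, rfl⟩, _, ⟨l₂, h₂, rfl, rfl⟩, rfl⟩
  dsimp only
  rw [he.traceForm_prod hsa h₁ h₂ hlen, if_neg (by rintro rfl; exact hkk' rfl)]

theorem IsCliffordSystem.linearIndependent_prod_sort [Nontrivial V] {m : ℕ}
    (hm : 2 * m < Fintype.card ι) :
    LinearIndependent ℝ fun s : {s : Finset ι // s.card ≤ m} =>
      ((s.1.sort (· ≤ ·)).map e).prod := by
  have hlen (s t : {s : Finset ι // s.card ≤ m}) :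
      (s.1.sort (· ≤ ·)).length + (t.1.sort (· ≤ ·)).length < Fintype.card ι := by
    simp only [Finset.length_sort]; omega
  refine LinearMap.BilinForm.linearIndependent_of_iIsOrtho (B := traceForm V) ?_ fun s => ?_
  · intro s t hst
    change traceForm V _ _ = 0
    rw [he.traceForm_prod hsa
      (Finset.sortedLT_sort _).pairwise (Finset.sortedLT_sort _).pairwise (hlen s t), if_neg]
    intro h
    exact hst (Subtype.ext (by rw [← Finset.sort_toFinset s.1 (· ≤ ·), h, Finset.sort_toFinset]))
  · rw [he.traceForm_prod hsa (Finset.sortedLT_sort _).pairwise (Finset.sortedLT_sort _).pairwise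
      (hlen s s), if_pos rfl]
    exact Nat.cast_ne_zero.2 Module.finrank_pos.ne'

theorem IsCliffordSystem.span_prod_sort_eq_top [Nontrivial V] {m : ℕ}
    (hm : 2 * m < Fintype.card ι)
    (hdim : Module.finrank ℝ (V →ₗ[ℝ] V) = Fintype.card {s : Finset ι // s.card ≤ m}) :
    Submodule.span ℝ (Set.range fun s : {s : Finset ι // s.card ≤ m} =>
      ((s.1.sort (· ≤ ·)).map e).prod) = ⊤ :=
  Submodule.eq_top_of_finrank_eq <| by
    rw [finrank_span_eq_card (he.linearIndependent_prod_sort hsa hm), hdim]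

end TraceForm

theorem IsCliffordSystem.sup_prodSpan_eq_top {V : Type*} [NormedAddCommGroup V]
    [InnerProductSpace ℝ V] [FiniteDimensional ℝ V] {e : Fin 9 → V →ₗ[ℝ] V}
    (he : IsCliffordSystem e) (hsa : ∀ i, IsSelfAdjoint (e i)) (hV : Module.finrank ℝ V = 16) :
    prodSpan ℝ e 0 ⊔ prodSpan ℝ e 1 ⊔ prodSpan ℝ e 2 ⊔ prodSpan ℝ e 3 ⊔ prodSpan ℝ e 4 = ⊤ := by
  have : Nontrivial V := Module.nontrivial_of_finrank_pos (R := ℝ) (by omega)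
  have hdim :
      Module.finrank ℝ (V →ₗ[ℝ] V) = Fintype.card {s : Finset (Fin 9) // s.card ≤ 4} := by
    rw [Module.finrank_linearMap, hV, Fintype.card_finset_card_le, Fintype.card_fin]
    rfl
  rw [eq_top_iff, ← he.span_prod_sort_eq_top hsa (by decide) hdim, Submodule.span_le]
  rintro _ ⟨s, rfl⟩
  have hmem := prod_mem_prodSpan (R := ℝ) e (Finset.sortedLT_sort s.1).pairwise
  rw [Finset.length_sort] at hmem
  have hle : prodSpan ℝ e s.1.card ≤
      prodSpan ℝ e 0 ⊔ prodSpan ℝ e 1 ⊔ prodSpan ℝ e 2 ⊔ prodSpan ℝ e 3 ⊔ prodSpan ℝ e 4 := by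
    have := s.2
    interval_cases s.1.card <;> order
  exact hle hmem

/-- Lemma 3(1): for a `Cl⁺(9)`-system `S₀,…,S₈` on `ℝ¹⁶`, with `L_k` the span of all
increasing products of `k` of the `Sᵢ`'s: `L_{9−k} = L_k`; the operators `(1/4)S_{i₁}⋯S_{i_k}`
(`0 ≤ k ≤ 4`, `i₁ < ⋯ < i_k`) are orthonormal for the trace inner product and span `End(ℝ¹⁶)`,
which is the orthogonal direct sum `L₀ ⊕ L₁ ⊕ L₂ ⊕ L₃ ⊕ L₄`; moreover the symmetric
endomorphisms form `L₀ ⊕ L₁ ⊕ L₄` and the skew-symmetric ones form `L₂ ⊕ L₃`. -/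
theorem stmt7 (S : Fin 9 → (E16 →ₗ[ℝ] E16))
    (hsymm : ∀ i, LinearMap.adjoint (S i) = S i)
    (hcl : ∀ i j, S i * S j + S j * S i =
      if i = j then (2 : ℝ) • (1 : E16 →ₗ[ℝ] E16) else 0)
    (L : ℕ → Submodule ℝ (E16 →ₗ[ℝ] E16))
    (hL : ∀ k, L k = Submodule.span ℝ
      {P | ∃ l : List (Fin 9), l.Pairwise (· < ·) ∧ l.length = k ∧ P = (l.map S).prod}) :
    (∀ k ≤ 9, L (9 - k) = L k) ∧
    (∀ l₁ l₂ : List (Fin 9), l₁.Pairwise (· < ·) → l₂.Pairwise (· < ·) →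
      l₁.length ≤ 4 → l₂.length ≤ 4 →
      LinearMap.trace ℝ E16
        ((((1 : ℝ)/4) • (l₁.map S).prod) * LinearMap.adjoint (((1 : ℝ)/4) • (l₂.map S).prod))
        = if l₁ = l₂ then 1 else 0) ∧
    (L 0 ⊔ L 1 ⊔ L 2 ⊔ L 3 ⊔ L 4 = ⊤) ∧
    (∀ k k' : ℕ, k ≤ 4 → k' ≤ 4 → k ≠ k' → ∀ P ∈ L k, ∀ Q ∈ L k',
      LinearMap.trace ℝ E16 (P * LinearMap.adjoint Q) = 0) ∧
    (∀ A : E16 →ₗ[ℝ] E16,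
      (LinearMap.adjoint A = A ↔ A ∈ L 0 ⊔ L 1 ⊔ L 4) ∧
      (LinearMap.adjoint A = -A ↔ A ∈ L 2 ⊔ L 3)) := by
  have he : IsCliffordSystem S := IsCliffordSystem.of_anticommutator_eq hcl
  have hsa (i : Fin 9) : IsSelfAdjoint (S i) := (LinearMap.star_eq_adjoint _).trans (hsymm i)
  obtain rfl : L = prodSpan ℝ S := funext hL
  have htop := he.sup_prodSpan_eq_top hsa finrank_euclideanSpace_fin
  have hadjoin : Algebra.adjoin ℝ (Set.range S) = ⊤ := by
    rw [← Algebra.toSubmodule_eq_top, eq_top_iff, ← htop]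
    simp only [sup_le_iff, prodSpan_le_adjoin, and_self]
  have hω := he.prod_finRange_mem_bot (R := ℝ) (by decide) hadjoin
  obtain ⟨hsym, hskew⟩ := he.sup_prodSpan_eq_selfAdjoint_and_eq_skewAdjoint hsa htop
  refine ⟨fun k hk => ?_, fun l₁ l₂ h₁ h₂ hl₁ hl₂ => ?_, htop,
    fun k k' hk hk' hkk' P hP Q hQ =>
      he.traceForm_eq_zero hsa hkk' (by rw [Fintype.card_fin]; omega) hP hQ,
    fun A => ⟨?_, ?_⟩⟩
  · refine le_antisymm (he.prodSpan_sub_le hω hk) ?_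
    simpa [Nat.sub_sub_self hk] using he.prodSpan_sub_le hω (Nat.sub_le 9 k)
  · have h := he.traceForm_prod hsa h₁ h₂ (by rw [Fintype.card_fin]; omega)
    rw [traceForm_apply, finrank_euclideanSpace_fin] at h
    rw [map_smul, smul_mul_assoc, mul_smul_comm, map_smul, map_smul, h]
    split_ifs <;> norm_num
  · rw [hsym, ← LinearMap.star_eq_adjoint]
    rfl
  · rw [hskew, ← LinearMap.star_eq_adjoint]
    rfl
end

section
/- Let S_0, …, S_8 be a Cl⁺(9)-system on ℝ^16 and let A(Q) = Σ_{i=0}^{8} S_iQS_i. Then A is self-adjoint with respect to the trace inner product on End(ℝ^16), and for every 0 ≤ k ≤ 4 and every Q ∈ L_k one has A(Q) = (−1)^k(9 − 2k)·Q; the subspaces L_0, L_1, L_2, L_3, L_4 are precisely the eigenspaces of A, with the pairwise distinct eigenvalues 9, −7, 5, −3, 1 respectively. In particular, Sym(ℝ^16) and Skew(ℝ^16) are invariant subspaces of A. -/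
section CliffordRelations

variable {K R ι : Type*} [Field K] [Ring R] [Algebra K R] [DecidableEq ι] {S : ι → R}

theorem mul_self_eq_one_of_clifford [NeZero (2 : K)]
    (hcl : ∀ i j, S i * S j + S j * S i = if i = j then (2 : K) • 1 else 0) (i : ι) :
    S i * S i = 1 := by
  have h : (2 : K) • (S i * S i) = (2 : K) • 1 := by simpa [two_smul] using hcl i i
  exact smul_right_injective R two_ne_zero h

theorem mul_anticomm_of_clifford
    (hcl : ∀ i j, S i * S j + S j * S i = if i = j then (2 : K) • 1 else 0) {i j : ι}
    (hij : i ≠ j) : S j * S i = -(S i * S j) :=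
  eq_neg_of_add_eq_zero_right (by simpa [hij] using hcl i j)

end CliffordRelations

section SignRules

variable {K R ι : Type*} [CommRing K] [Ring R] [Algebra K R] [DecidableEq ι] {S : ι → R}

theorem mul_prod_map_eq_smul (hanti : ∀ i j, i ≠ j → S j * S i = -(S i * S j)) (j : ι)
    (l : List ι) :
    S j * (l.map S).prod = (-1 : K) ^ (l.length + l.count j) • ((l.map S).prod * S j) := by
  induction l with
  | nil => simp
  | cons i t ih =>
    simp only [List.map_cons, List.prod_cons, List.length_cons, List.count_cons, beq_iff_eq]
    by_cases hij : i = j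
    · subst hij
      conv_lhs => rw [ih, mul_smul_comm, ← mul_assoc]
      simp only [if_true]
      congr 1; ring
    · rw [← mul_assoc, hanti i j hij, neg_mul, mul_assoc, ih, mul_smul_comm, ← mul_assoc,
        if_neg hij, add_zero, ← neg_smul]
      congr 1; ring

variable (hsq : ∀ i, S i * S i = 1) (hanti : ∀ i j, i ≠ j → S j * S i = -(S i * S j))
include hsq hanti

theorem mul_prod_map_mul_eq_smul (j : ι) (l : List ι) :
    S j * (l.map S).prod * S j = (-1 : K) ^ (l.length + l.count j) • (l.map S).prod := by
  rw [mul_prod_map_eq_smul (K := K) hanti, smul_mul_assoc, mul_assoc, hsq, mul_one]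

theorem exists_prod_map_mul_self_eq (l : List ι) :
    ∃ n : ℕ, (l.map S).prod * (l.map S).prod = (-1 : K) ^ n • 1 := by
  induction l with
  | nil => exact ⟨0, by simp⟩
  | cons i t ih =>
    obtain ⟨n, hn⟩ := ih
    refine ⟨t.length + t.count i + n, ?_⟩
    simp only [List.map_cons, List.prod_cons]
    rw [← mul_assoc, mul_prod_map_mul_eq_smul (K := K) hsq hanti, smul_mul_assoc, hn, smul_smul,
      ← pow_add]

end SignRules

theorem List.sum_count_eq_length {ι : Type*} [Fintype ι] [DecidableEq ι] (l : List ι) :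
    ∑ j, l.count j = l.length := by
  rw [← Finset.sum_subset (Finset.subset_univ l.toFinset), List.sum_toFinset_count_eq_length]
  intro j _ hj
  exact List.count_eq_zero.mpr (by simpa using hj)

theorem List.Nodup.sum_neg_one_pow_count {K ι : Type*} [CommRing K] [Fintype ι] [DecidableEq ι]
    {l : List ι} (hl : l.Nodup) :
    ∑ j, (-1 : K) ^ l.count j = Fintype.card ι - 2 * l.length := by
  have h j : (-1 : K) ^ l.count j = 1 - 2 * (l.count j : K) := by
    rcases Nat.le_one_iff_eq_zero_or_eq_one.mp (List.nodup_iff_count_le_one.mp hl j) with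
      h | h <;> rw [h] <;> norm_num
  simp only [h, Finset.sum_sub_distrib, ← Finset.mul_sum, ← Nat.cast_sum, l.sum_count_eq_length]
  simp

section SandwichSum

variable (K : Type*) {R ι : Type*} [CommRing K] [Ring R] [Algebra K R] [Fintype ι]

def sandwichSum (S : ι → R) : Module.End K R :=
  ∑ i, LinearMap.mulLeft K (S i) ∘ₗ LinearMap.mulRight K (S i)

theorem sandwichSum_apply (S : ι → R) (Q : R) : sandwichSum K S Q = ∑ i, S i * Q * S i := by
  simp [sandwichSum, mul_assoc]

variable {K} [DecidableEq ι] {S : ι → R}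

theorem sandwichSum_prod_map (hsq : ∀ i, S i * S i = 1)
    (hanti : ∀ i j, i ≠ j → S j * S i = -(S i * S j)) {l : List ι} (hl : l.Nodup) :
    sandwichSum K S (l.map S).prod
      = ((-1) ^ l.length * (Fintype.card ι - 2 * l.length : K)) • (l.map S).prod := by
  simp only [sandwichSum_apply, mul_prod_map_mul_eq_smul (K := K) hsq hanti, ← Finset.sum_smul,
    pow_add, ← Finset.mul_sum, hl.sum_neg_one_pow_count]

end SandwichSum

section CliffordSpan

variable (K : Type*) {R ι : Type*} [CommRing K] [Ring R] [Algebra K R] [LinearOrder ι]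

def cliffordSpan (S : ι → R) (k : ℕ) : Submodule K R :=
  Submodule.span K {P | ∃ l : List ι, l.Pairwise (· < ·) ∧ l.length = k ∧ P = (l.map S).prod}

variable {K} [Fintype ι] {S : ι → R}

theorem cliffordSpan_le_eigenspace (hsq : ∀ i, S i * S i = 1)
    (hanti : ∀ i j, i ≠ j → S j * S i = -(S i * S j)) (k : ℕ) :
    cliffordSpan K S k
      ≤ (sandwichSum K S).eigenspace ((-1) ^ k * (Fintype.card ι - 2 * k : K)) := by
  refine Submodule.span_le.mpr ?_
  rintro - ⟨l, hl, rfl, rfl⟩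
  exact Module.End.mem_eigenspace_iff.mpr (sandwichSum_prod_map hsq hanti hl.nodup)

end CliffordSpan

theorem exists_odd_length_add_count {ι : Type*} [Fintype ι] [DecidableEq ι] {l m : List ι}
    (hl : l.Nodup) (hm : m.Nodup) (hne : l.toFinset ≠ m.toFinset)
    (hlen : l.length + m.length < Fintype.card ι) :
    ∃ j, Odd (l.length + l.count j + (m.length + m.count j)) := by
  have count_eq (n : List ι) (hn : n.Nodup) (j : ι) : n.count j = if j ∈ n then 1 else 0 := by
    split_ifs with h
    exacts [List.count_eq_one_of_mem hn h, List.count_eq_zero.mpr h]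
  simp only [Nat.odd_iff, count_eq l hl, count_eq m hm]
  rcases Nat.even_or_odd (l.length + m.length) with hpar | hpar
  · rw [Nat.even_iff] at hpar
    obtain ⟨j, hj⟩ : ∃ j, ¬(j ∈ l ↔ j ∈ m) := by
      by_contra! h
      exact hne (Finset.ext fun j => by simpa using h j)
    refine ⟨j, ?_⟩
    split_ifs <;> first | omega | tauto
  · rw [Nat.odd_iff] at hpar
    obtain ⟨j, -, hj⟩ := Finset.exists_mem_notMem_of_card_lt_card
      (s := l.toFinset ∪ m.toFinset) (t := Finset.univ) <| calc
        _ ≤ l.toFinset.card + m.toFinset.card := Finset.card_union_le _ _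
        _ ≤ l.length + m.length := add_le_add l.toFinset_card_le m.toFinset_card_le
        _ < _ := hlen
    simp only [Finset.mem_union, List.mem_toFinset, not_or] at hj
    exact ⟨j, by simp [hj.1, hj.2]; omega⟩

section Trace

variable {K V ι : Type*} [Field K] [AddCommGroup V] [Module K V]

theorem LinearMap.trace_mul_mul_of_mul_self_eq_one {s : Module.End K V} (hs : s * s = 1)
    (X : Module.End K V) : trace K V (s * X * s) = trace K V X := by
  rw [trace_mul_comm, ← mul_assoc, hs, one_mul]

theorem trace_sandwichSum_mul [Fintype ι] (S : ι → Module.End K V) (P Q : Module.End K V) :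
    LinearMap.trace K V (sandwichSum K S P * Q)
      = LinearMap.trace K V (P * sandwichSum K S Q) := by
  simp only [sandwichSum_apply, Finset.sum_mul, Finset.mul_sum, map_sum]
  refine Finset.sum_congr rfl fun i _ => ?_
  rw [mul_assoc, mul_assoc, LinearMap.trace_mul_comm]
  simp only [mul_assoc]

variable [CharZero K] {S : ι → Module.End K V} (hsq : ∀ i, S i * S i = 1)
  (hanti : ∀ i j, i ≠ j → S j * S i = -(S i * S j))
include hsq hanti

theorem trace_prod_map_mul_prod_map_eq_zero [DecidableEq ι] {l m : List ι} {j : ι}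
    (hodd : Odd (l.length + l.count j + (m.length + m.count j))) :
    LinearMap.trace K V ((l.map S).prod * (m.map S).prod) = 0 := by
  set P := (l.map S).prod
  set P' := (m.map S).prod
  have hconj : S j * (P * P') * S j = -(P * P') := calc
    S j * (P * P') * S j = (S j * P * S j) * (S j * P' * S j) := by
      simp only [mul_assoc, ← mul_assoc (S j) (S j), hsq, one_mul]
    _ = -(P * P') := by
      rw [mul_prod_map_mul_eq_smul (K := K) hsq hanti,
        mul_prod_map_mul_eq_smul (K := K) hsq hanti, smul_mul_smul_comm, ← pow_add,
        hodd.neg_one_pow, neg_one_smul]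
  have h := LinearMap.trace_mul_mul_of_mul_self_eq_one (hsq j) (P * P')
  rwa [hconj, map_neg, CharZero.neg_eq_self_iff] at h

theorem linearIndependent_prod_sort [LinearOrder ι] [Fintype ι] [FiniteDimensional K V]
    [Nontrivial V] {k : ℕ} (hk : 2 * k < Fintype.card ι) :
    LinearIndependent K fun T : {T : Finset ι // T.card ≤ k} => ((T.1.sort).map S).prod := by
  rw [Fintype.linearIndependent_iff]
  intro g hg U
  have htr := congrArg (fun P => LinearMap.trace K V (((U.1.sort).map S).prod * P)) hg
  simp only [Finset.mul_sum, mul_smul_comm, map_sum, map_smul, smul_eq_mul, mul_zero,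
    map_zero] at htr
  rw [Finset.sum_eq_single U (fun T _ hTU => ?_) (by simp)] at htr
  · obtain ⟨n, hn⟩ := exists_prod_map_mul_self_eq (K := K) hsq hanti (U.1.sort)
    rw [hn, map_smul, LinearMap.trace_one, smul_eq_mul] at htr
    exact (mul_eq_zero.mp htr).resolve_right (by simp [Module.finrank_pos.ne'])
  · obtain ⟨j, hj⟩ := exists_odd_length_add_count
      (U.1.sort_nodup (· ≤ ·)) (T.1.sort_nodup (· ≤ ·))
      (by rw [Finset.sort_toFinset, Finset.sort_toFinset]
          exact fun h => hTU (Subtype.ext h.symm))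
      (by simp only [Finset.length_sort]; omega)
    rw [trace_prod_map_mul_prod_map_eq_zero hsq hanti hj, mul_zero]

theorem iSup_cliffordSpan_eq_top [LinearOrder ι] [Fintype ι] [FiniteDimensional K V]
    [Nontrivial V] {k : ℕ} (hk : 2 * k < Fintype.card ι)
    (hcard : Fintype.card {T : Finset ι // T.card ≤ k} = Module.finrank K (Module.End K V)) :
    ⨆ j : Fin (k + 1), cliffordSpan K S j = ⊤ := by
  rw [eq_top_iff,
    ← (linearIndependent_prod_sort hsq hanti hk).span_eq_top_of_card_eq_finrank' hcard,
    Submodule.span_le]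
  rintro - ⟨T, rfl⟩
  exact Submodule.mem_iSup_of_mem ⟨T.1.card, by omega⟩ <| Submodule.subset_span
    ⟨T.1.sort, T.1.sortedLT_sort.pairwise, Finset.length_sort _, rfl⟩

end Trace

theorem adjoint_sandwichSum {𝕜 E ι : Type*} [RCLike 𝕜] [NormedAddCommGroup E]
    [InnerProductSpace 𝕜 E] [FiniteDimensional 𝕜 E] [Fintype ι] {S : ι → Module.End 𝕜 E}
    (hS : ∀ i, LinearMap.adjoint (S i) = S i) (Q : Module.End 𝕜 E) :
    LinearMap.adjoint (sandwichSum 𝕜 S Q) = sandwichSum 𝕜 S (LinearMap.adjoint Q) := by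
  simp only [sandwichSum_apply, ← LinearMap.star_eq_adjoint, star_sum, star_mul] at hS ⊢
  simp only [hS, mul_assoc]

theorem Module.End.exists_eq_and_mem_of_apply_eq_smul {K V ι : Type*} [Field K]
    [AddCommGroup V] [Module K V] {f : Module.End K V} {p : ι → Submodule K V} {c : ι → K}
    (hc : Function.Injective c) (hp : ∀ i, p i ≤ f.eigenspace (c i)) (htop : ⨆ i, p i = ⊤)
    {μ : K} {x : V} (hx : x ≠ 0) (hfx : f x = μ • x) : ∃ i, μ = c i ∧ x ∈ p i := by
  obtain ⟨a, ha, b, hb, rfl⟩ : ∃ a ∈ ⨆ (i) (_ : c i = μ), p i, ∃ b ∈ ⨆ (i) (_ : c i ≠ μ), p i,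
      a + b = x :=
    Submodule.mem_sup.mp (by rw [← iSup_split, htop]; exact Submodule.mem_top)
  have hb0 : b = 0 := by
    have hbν : (⨆ (i) (_ : c i ≠ μ), p i) ≤ ⨆ (ν) (_ : ν ≠ μ), f.eigenspace ν :=
      iSup₂_le fun i hi => (hp i).trans (le_iSup₂ (f := fun ν _ => f.eigenspace ν) (c i) hi)
    have haμ : (⨆ (i) (_ : c i = μ), p i) ≤ f.eigenspace μ := iSup₂_le fun i hi => hi ▸ hp i
    have hbμ : b ∈ f.eigenspace μ := by
      simpa using (f.eigenspace μ).sub_mem (Module.End.mem_eigenspace_iff.mpr hfx) (haμ ha)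
    exact Submodule.disjoint_def.mp (f.eigenspaces_iSupIndep μ) b hbμ (hbν hb)
  subst hb0
  rw [add_zero] at hx ⊢
  obtain ⟨i, hi⟩ : ∃ i, c i = μ := by
    by_contra! h
    simp [h] at ha
    exact hx ha
  have hpi : (⨆ (j) (_ : c j = μ), p j) ≤ p i :=
    iSup₂_le fun j hj => by rw [hc (hj.trans hi.symm)]
  exact ⟨i, hi.symm, hpi ha⟩

set_option maxRecDepth 10000 in
theorem card_finset_fin_nine_card_le_four :
    Fintype.card {T : Finset (Fin 9) // T.card ≤ 4} = 256 := by
  decide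

theorem injective_neg_one_pow_mul_nine_sub_two_mul :
    Function.Injective fun k : Fin 5 => (-1 : ℝ) ^ (k : ℕ) * (9 - 2 * (k : ℕ)) := by
  intro a b h
  fin_cases a <;> fin_cases b <;> first | rfl | norm_num at h

/-- Lemma 3(2): for a `Cl⁺(9)`-system on `ℝ¹⁶`, the operator `𝒜(Q) = Σᵢ SᵢQSᵢ` is
self-adjoint for the trace inner product, acts on `L_k` (`0 ≤ k ≤ 4`) as the scalar
`(−1)^k(9 − 2k)`, its eigenspaces are precisely the `L_k`, and it preserves the symmetric
and the skew-symmetric endomorphisms. -/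
theorem stmt8 (S : Fin 9 → (E16 →ₗ[ℝ] E16))
    (hsymm : ∀ i, LinearMap.adjoint (S i) = S i)
    (hcl : ∀ i j, S i * S j + S j * S i =
      if i = j then (2 : ℝ) • (1 : E16 →ₗ[ℝ] E16) else 0)
    (L : ℕ → Submodule ℝ (E16 →ₗ[ℝ] E16))
    (hL : ∀ k, L k = Submodule.span ℝ
      {P | ∃ l : List (Fin 9), l.Pairwise (· < ·) ∧ l.length = k ∧ P = (l.map S).prod})
    (A : (E16 →ₗ[ℝ] E16) → (E16 →ₗ[ℝ] E16))
    (hA : ∀ Q, A Q = ∑ i, S i * Q * S i) :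
    (∀ P Q, LinearMap.trace ℝ E16 (A P * LinearMap.adjoint Q)
      = LinearMap.trace ℝ E16 (P * LinearMap.adjoint (A Q))) ∧
    (∀ k ≤ 4, ∀ Q ∈ L k, A Q = ((-1 : ℝ) ^ k * (9 - 2 * (k : ℝ))) • Q) ∧
    (∀ (μ : ℝ) (Q : E16 →ₗ[ℝ] E16), Q ≠ 0 → A Q = μ • Q →
      ∃ k : ℕ, k ≤ 4 ∧ μ = (-1 : ℝ) ^ k * (9 - 2 * (k : ℝ)) ∧ Q ∈ L k) ∧
    (∀ Q, LinearMap.adjoint Q = Q → LinearMap.adjoint (A Q) = A Q) ∧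
    (∀ Q, LinearMap.adjoint Q = -Q → LinearMap.adjoint (A Q) = -(A Q)) := by
  have hsq := mul_self_eq_one_of_clifford hcl
  have hanti i j (hij : i ≠ j) := mul_anticomm_of_clifford hcl hij
  obtain rfl : A = sandwichSum ℝ S :=
    funext fun Q => (hA Q).trans (sandwichSum_apply ℝ S Q).symm
  obtain rfl : L = cliffordSpan ℝ S := funext hL
  have heig (k : ℕ) :
      cliffordSpan ℝ S k ≤ (sandwichSum ℝ S).eigenspace ((-1) ^ k * (9 - 2 * k)) := by
    simpa using cliffordSpan_le_eigenspace hsq hanti k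
  have hadj := adjoint_sandwichSum hsymm
  refine ⟨fun P Q => by rw [hadj, trace_sandwichSum_mul],
    fun k _ Q hQ => Module.End.mem_eigenspace_iff.mp (heig k hQ), fun μ Q hQ hμ => ?_,
    fun Q hQ => by rw [hadj, hQ], fun Q hQ => by rw [hadj, hQ, map_neg]⟩
  have htop : ⨆ k : Fin 5, cliffordSpan ℝ S k = ⊤ := by
    refine iSup_cliffordSpan_eq_top hsq hanti (by simp) ?_
    rw [card_finset_fin_nine_card_le_four, Module.finrank_linearMap, finrank_euclideanSpace_fin]
  obtain ⟨k, hk, hQk⟩ := Module.End.exists_eq_and_mem_of_apply_eq_smul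
    injective_neg_one_pow_mul_nine_sub_two_mul (fun k => heig k) htop hQ hμ
  exact ⟨k, by omega, hk, hQk⟩
end

section
/- Let S_0, …, S_8 be a Cl⁺(9)-system on ℝ^16 and let L_1 be the linear span of S_0, …, S_8 in End(ℝ^16). If S'_0, …, S'_8 ∈ L_1 are pairwise orthogonal with respect to the trace inner product and each has norm 4 (i.e. Tr(S'_i(S'_j)ᵗ) = 16δ_{ij}), then Σ_{i=0}^{8} S'_iQS'_i = Σ_{i=0}^{8} S_iQS_i for every Q ∈ End(ℝ^16); that is, the operator A(Q) = Σ_i S_iQS_i does not depend on the choice of such an orthogonal family spanning L_1. -/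
open scoped Matrix

section CliffordTrace

variable {K V : Type*} [Field K] [AddCommGroup V] [Module K V]
  {ι : Type*} [DecidableEq ι]

theorem LinearMap.trace_mul_eq_of_anticomm [FiniteDimensional K V] [NeZero (2 : K)]
    {S : ι → Module.End K V}
    (hcl : ∀ i j, S i * S j + S j * S i = if i = j then (2 : K) • (1 : Module.End K V) else 0)
    (k l : ι) :
    LinearMap.trace K V (S k * S l) = if k = l then (Module.finrank K V : K) else 0 := by
  have htr := congrArg (LinearMap.trace K V) (hcl k l)
  rw [map_add, LinearMap.trace_mul_comm K (S l) (S k), ← two_smul K] at htr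
  split_ifs at htr ⊢ with hkl
  · rwa [map_smul, LinearMap.trace_one, smul_right_inj two_ne_zero] at htr
  · rwa [map_zero, smul_eq_zero_iff_right two_ne_zero] at htr

theorem LinearMap.trace_sum_smul_mul_sum_smul [Fintype ι] {S : ι → Module.End K V} {d : K}
    (htr : ∀ k l, LinearMap.trace K V (S k * S l) = if k = l then d else 0) (a b : ι → K) :
    LinearMap.trace K V ((∑ k, a k • S k) * ∑ l, b l • S l) = d * (a ⬝ᵥ b) := by
  simp only [Finset.sum_mul, Finset.mul_sum, smul_mul_smul_comm, map_sum, map_smul, htr,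
    smul_eq_mul, mul_ite, mul_zero, Finset.sum_ite_eq', Finset.mem_univ, if_true,
    dotProduct]
  exact Finset.sum_congr rfl fun _ _ => by ring

theorem Matrix.mul_transpose_eq_one_of_trace [Fintype ι] {S S' : ι → Module.End K V} {d : K}
    (hd : d ≠ 0)
    (htr : ∀ k l, LinearMap.trace K V (S k * S l) = if k = l then d else 0)
    (c : Matrix ι ι K) (hc : ∀ i, ∑ k, c i k • S k = S' i)
    (htr' : ∀ i j, LinearMap.trace K V (S' i * S' j) = if i = j then d else 0) :
    c * cᵀ = 1 := by
  ext i j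
  have h := htr' i j
  rw [← hc i, ← hc j, LinearMap.trace_sum_smul_mul_sum_smul htr] at h
  rw [Matrix.mul_apply, Matrix.one_apply, ← mul_right_inj' hd]
  simpa [dotProduct, mul_ite] using h

end CliffordTrace

theorem sum_mul_mul_eq_of_transpose_mul_eq_one {K A ι : Type*} [CommRing K] [Ring A]
    [Algebra K A] [Fintype ι] [DecidableEq ι] {S S' : ι → A} (c : Matrix ι ι K)
    (horth : cᵀ * c = 1)
    (hc : ∀ i, ∑ k, c i k • S k = S' i) (Q : A) :
    ∑ i, S' i * Q * S' i = ∑ k, S k * Q * S k := by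
  have hcol : ∀ k l, ∑ i, c i k * c i l = if k = l then 1 else 0 := fun k l => by
    simpa [Matrix.mul_apply, Matrix.one_apply] using congrFun (congrFun horth k) l
  calc ∑ i, S' i * Q * S' i = ∑ i, ∑ k, ∑ l, (c i k * c i l) • (S k * Q * S l) := by
        simp_rw [← hc, Finset.sum_mul, Finset.mul_sum, smul_mul_assoc, mul_smul_comm, smul_smul]
    _ = ∑ k, ∑ l, (∑ i, c i k * c i l) • (S k * Q * S l) := by
        simp_rw [Finset.sum_smul]
        rw [Finset.sum_comm]
        exact Finset.sum_congr rfl fun k _ => Finset.sum_comm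
    _ = ∑ k, S k * Q * S k := by simp [hcol, ite_smul]

/-- Lemma 3(2), independence of basis: if `S'₀,…,S'₈` lie in the span `L₁` of a
`Cl⁺(9)`-system `S₀,…,S₈` and are orthogonal of norm 4 for the trace inner product,
then `Σᵢ S'ᵢQS'ᵢ = Σᵢ SᵢQSᵢ` for every endomorphism `Q`. -/
theorem stmt9 (S : Fin 9 → (E16 →ₗ[ℝ] E16))
    (hsymm : ∀ i, LinearMap.adjoint (S i) = S i)
    (hcl : ∀ i j, S i * S j + S j * S i =
      if i = j then (2 : ℝ) • (1 : E16 →ₗ[ℝ] E16) else 0)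
    (S' : Fin 9 → (E16 →ₗ[ℝ] E16))
    (hmem : ∀ i, S' i ∈ Submodule.span ℝ (Set.range S))
    (horth : ∀ i j, LinearMap.trace ℝ E16 (S' i * LinearMap.adjoint (S' j))
      = if i = j then 16 else 0) :
    ∀ Q : E16 →ₗ[ℝ] E16, ∑ i, S' i * Q * S' i = ∑ i, S i * Q * S i := by
  have htr := LinearMap.trace_mul_eq_of_anticomm hcl
  rw [finrank_euclideanSpace_fin] at htr
  have hsa : Submodule.span ℝ (Set.range S) ≤ selfAdjoint.submodule ℝ (E16 →ₗ[ℝ] E16) :=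
    Submodule.span_le.mpr <| by
      rintro _ ⟨k, rfl⟩
      exact LinearMap.isSelfAdjoint_iff'.mpr (hsymm k)
  have horth' : ∀ i j, LinearMap.trace ℝ E16 (S' i * S' j) = if i = j then 16 else 0 :=
    fun i j => by rw [← LinearMap.isSelfAdjoint_iff'.mp (hsa (hmem j)), horth]
  choose c hc using fun i => (Submodule.mem_span_range_iff_exists_fun ℝ).mp (hmem i)
  have hrow := Matrix.mul_transpose_eq_one_of_trace (by norm_num) (by exact_mod_cast htr)
    (Matrix.of c) hc horth'
  exact sum_mul_mul_eq_of_transpose_mul_eq_one (Matrix.of c) (mul_eq_one_comm.mp hrow) hc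
end

section
/- Let F_0, …, F_8 be homogeneous polynomials of degree 2 in the real polynomial ring ℝ[w_0, …, w_8] such that the polynomial ‖w‖² = w_0² + ··· + w_8² divides w_iF_j − w_jF_i for all i, j ∈ {0, …, 8}. Then there exist a homogeneous linear polynomial Y ∈ ℝ[w_0, …, w_8] and real constants g_0, …, g_8 such that F_i = Y·w_i + g_i·‖w‖² for every i. -/
/-!
Write `X i * F j - X j * F i = q * L i j` with `q = ‖w‖²`. Comparing degrees, the `L i j` are
linear forms, and cancelling `q` shows that they form a Koszul cocycle:
`X i * L j k - X j * L i k + X k * L i j = 0`. Comparing coefficients in this identity, a cocycle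
of linear forms is a coboundary, `L i j = a j * X i - a i * X j` for constants `a i`. Then
`G i = F i - a i * q` satisfies `X i * G j = X j * G i`, and as the variables are pairwise
non-associated primes, `G i = X i * Y` for a single linear form `Y`.
-/

open MvPolynomial

namespace MvPolynomial

variable {σ R : Type*} [CommRing R] {p q : MvPolynomial σ R} {m n : ℕ}

section Graded

attribute [local instance] gradedAlgebra

theorem homogeneousComponent_mul_of_isHomogeneous_left (hp : p.IsHomogeneous m) :
    homogeneousComponent (m + n) (p * q) = p * homogeneousComponent n q := by
  have := DirectSum.coe_decompose_mul_of_left_mem_of_le (homogeneousSubmodule σ R) (b := q)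
    ((mem_homogeneousSubmodule m p).2 hp) (Nat.le_add_right m n)
  rw [Nat.add_sub_cancel_left] at this
  rw [← decomposition.decompose'_apply, ← decomposition.decompose'_apply]
  exact this

end Graded

theorem IsHomogeneous.of_mul_left [IsDomain R] (hp : p.IsHomogeneous m) (hp0 : p ≠ 0)
    (hpq : (p * q).IsHomogeneous (m + n)) : q.IsHomogeneous n := by
  intro d hd
  have hcomp : homogeneousComponent d.degree q ≠ 0 := fun h => hd (by
    simpa [coeff_homogeneousComponent] using congrArg (coeff d) h)
  rw [← mul_ne_zero_iff_left hp0, ← homogeneousComponent_mul_of_isHomogeneous_left hp,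
    homogeneousComponent_of_mem ((mem_homogeneousSubmodule _ _).2 hpq)] at hcomp
  have hdeg : d.degree = n := by
    by_contra h
    exact hcomp (if_neg (by omega))
  rwa [Finsupp.degree_eq_weight_one] at hdeg

theorem IsHomogeneous.eq_sum_C_coeff_mul_X [Fintype σ] (hp : p.IsHomogeneous 1) :
    p = ∑ i, C (coeff (Finsupp.single i 1) p) * X i := by
  classical
  obtain ⟨c, rfl⟩ := (Submodule.mem_span_range_iff_exists_fun R).1
    (homogeneousSubmodule_one_eq_span_X (σ := σ) (R := R) ▸ (mem_homogeneousSubmodule 1 p).2 hp)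
  refine Finset.sum_congr rfl fun i _ => ?_
  simp [coeff_sum, coeff_X, Finsupp.single_left_inj, smul_eq_C_mul]

section KoszulCocycle

variable {L : σ → σ → MvPolynomial σ R}

theorem coeff_single_eq_zero_of_cocycle
    (hL : ∀ i j k, X i * L j k - X j * L i k + X k * L i j = 0) {i j m : σ} (hmi : m ≠ i)
    (hmj : m ≠ j) : coeff (Finsupp.single m 1) (L i j) = 0 := by
  classical
  have h := congrArg (coeff (Finsupp.single m 1 + Finsupp.single m 1)) (hL i j m)
  simpa [coeff_X_mul', coeff_X_mul, hmi.symm, hmj.symm] using h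

theorem coeff_single_self_eq_of_cocycle
    (hL : ∀ i j k, X i * L j k - X j * L i k + X k * L i j = 0) {i j k : σ} (hji : j ≠ i)
    (hki : k ≠ i) : coeff (Finsupp.single k 1) (L i k) = coeff (Finsupp.single j 1) (L i j) := by
  classical
  have h := congrArg (coeff (Finsupp.single j 1 + Finsupp.single k 1)) (hL i j k)
  simpa [coeff_X_mul', hji.symm, hki.symm, neg_add_eq_zero] using h

theorem exists_eq_C_mul_X_sub_C_mul_X_of_cocycle [IsDomain R] [Fintype σ] [Nontrivial σ]
    (hlin : ∀ i j, (L i j).IsHomogeneous 1)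
    (hL : ∀ i j k, X i * L j k - X j * L i k + X k * L i j = 0) :
    ∃ a : σ → R, ∀ i j, L i j = C (a j) * X i - C (a i) * X j := by
  classical
  obtain ⟨i₀, j₁, hne⟩ := exists_pair_ne σ
  -- the coefficient of `X j` in `L i₀ j` is the same for all `j ≠ i₀`
  set c := coeff (Finsupp.single j₁ 1) (L i₀ j₁)
  let a : σ → R := fun j => if j = i₀ then -c else coeff (Finsupp.single i₀ 1) (L i₀ j)
  have hdiag : ∀ i, L i i = 0 := fun i => by simpa [X_ne_zero] using hL i i i
  have hrow : ∀ j, L i₀ j = C (a j) * X i₀ - C (a i₀) * X j := by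
    intro j
    by_cases hj : j = i₀
    · simp [hj, hdiag]
    rw [(hlin i₀ j).eq_sum_C_coeff_mul_X, Fintype.sum_eq_add i₀ j (Ne.symm hj) fun m hm => by
      rw [coeff_single_eq_zero_of_cocycle hL hm.1 hm.2, C_0, zero_mul],
      coeff_single_self_eq_of_cocycle hL hne.symm hj]
    simp [a, hj, c]
  refine ⟨a, fun i j => mul_left_cancel₀ (X_ne_zero i₀) ?_⟩
  linear_combination hL i₀ i j + X i * hrow j - X j * hrow i

end KoszulCocycle

theorem exists_eq_X_mul_of_X_mul_eq [IsDomain R] [Nontrivial σ] {G : σ → MvPolynomial σ R}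
    (hG : ∀ i j, X i * G j = X j * G i) : ∃ Y, ∀ i, G i = X i * Y := by
  obtain ⟨i₀, j₁, hne⟩ := exists_pair_ne σ
  obtain ⟨Y, hY⟩ : X i₀ ∣ G i₀ :=
    (X_prime.dvd_mul.1 ⟨G j₁, (hG i₀ j₁).symm⟩).resolve_left (by simpa using hne)
  exact ⟨Y, fun i => mul_left_cancel₀ (X_ne_zero i₀) (by rw [hG i₀ i, hY, mul_left_comm])⟩

theorem exists_eq_mul_X_add_C_mul_of_dvd [IsDomain R] [Fintype σ] [Nontrivial σ]
    {q : MvPolynomial σ R} (hq : q.IsHomogeneous 2) (hq0 : q ≠ 0) {F : σ → MvPolynomial σ R}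
    (hF : ∀ i, (F i).IsHomogeneous 2) (hdvd : ∀ i j, q ∣ X i * F j - X j * F i) :
    ∃ (Y : MvPolynomial σ R) (g : σ → R), Y.IsHomogeneous 1 ∧ ∀ i, F i = Y * X i + C (g i) * q := by
  choose L hL using hdvd
  have hlin : ∀ i j, (L i j).IsHomogeneous 1 := fun i j => hq.of_mul_left hq0 <| by
    rw [← hL i j]
    exact ((isHomogeneous_X R i).mul (hF j)).sub ((isHomogeneous_X R j).mul (hF i))
  have hcoc : ∀ i j k, X i * L j k - X j * L i k + X k * L i j = 0 := fun i j k =>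
    mul_left_cancel₀ hq0 <| by linear_combination -(X i * hL j k) + X j * hL i k - X k * hL i j
  obtain ⟨a, ha⟩ := exists_eq_C_mul_X_sub_C_mul_X_of_cocycle hlin hcoc
  obtain ⟨Y, hY⟩ := exists_eq_X_mul_of_X_mul_eq (G := fun i => F i - C (a i) * q) fun i j => by
    linear_combination hL i j + q * ha i j
  obtain ⟨i₀⟩ := (inferInstance : Nonempty σ)
  refine ⟨Y, a, (isHomogeneous_X R i₀).of_mul_left (X_ne_zero i₀) ?_, fun i => ?_⟩
  · rw [← hY i₀]
    exact (hF i₀).sub (hq.C_mul _)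
  · linear_combination hY i

end MvPolynomial

/-- If `F₀,…,F₈` are quadratic forms in `ℝ[w₀,…,w₈]` such that `‖w‖² = w₀² + ⋯ + w₈²`
divides `wᵢFⱼ − wⱼFᵢ` for all `i, j`, then `Fᵢ = Y·wᵢ + gᵢ·‖w‖²` for a linear form `Y`
and constants `gᵢ`. -/
theorem stmt14 (F : Fin 9 → MvPolynomial (Fin 9) ℝ)
    (hF : ∀ i, (F i).IsHomogeneous 2)
    (hdvd : ∀ i j : Fin 9, (∑ k : Fin 9, (X k : MvPolynomial (Fin 9) ℝ) ^ 2) ∣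
      (X i * F j - X j * F i)) :
    ∃ (Y : MvPolynomial (Fin 9) ℝ) (g : Fin 9 → ℝ), Y.IsHomogeneous 1 ∧
      ∀ i, F i = Y * X i + C (g i) * (∑ k : Fin 9, (X k : MvPolynomial (Fin 9) ℝ) ^ 2) := by
  have hq : (∑ k : Fin 9, (X k : MvPolynomial (Fin 9) ℝ) ^ 2).IsHomogeneous 2 :=
    IsHomogeneous.sum _ _ _ fun k _ => isHomogeneous_X_pow k 2
  have hq0 : (∑ k : Fin 9, (X k : MvPolynomial (Fin 9) ℝ) ^ 2) ≠ 0 := fun h => by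
    simpa using congrArg (eval 1) h
  exact exists_eq_mul_X_add_C_mul_of_dvd hq hq0 hF hdvd
end

section
/- Let S_0, …, S_8 be a Cl⁺(9)-system on ℝ^16, and let T_0, …, T_8 be symmetric (self-adjoint) endomorphisms of ℝ^16 satisfying T_iS_j + T_jS_i + S_jT_i + S_iT_j = 0 for all i, j ∈ {0, …, 8}. Then there exists a skew-symmetric endomorphism N of ℝ^16 such that T_i = S_iN − NS_i for every i = 0, …, 8. -/
section Ring

variable {ι A : Type*} [Ring A]

/-- The linearization at `S` of the Clifford relations `SᵢSⱼ + SⱼSᵢ = 2δᵢⱼ`. -/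
def IsCliffordVariation (S T : ι → A) : Prop :=
  ∀ i j, T i * S j + T j * S i + S j * T i + S i * T j = 0

theorem IsCliffordVariation.sub {S T T' : ι → A} (hT : IsCliffordVariation S T)
    (hT' : IsCliffordVariation S T') : IsCliffordVariation S (T - T') := by
  intro i j
  calc _ = (T i * S j + T j * S i + S j * T i + S i * T j)
        - (T' i * S j + T' j * S i + S j * T' i + S i * T' j) := by
          simp only [Pi.sub_apply]; noncomm_ring
    _ = 0 := by rw [hT i j, hT' i j, sub_zero]

theorem IsCliffordVariation.anticomm_of_eq_zero {S T : ι → A} (hT : IsCliffordVariation S T)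
    (i : ι) {j : ι} (hj : T j = 0) : T i * S j + S j * T i = 0 := by
  simpa [hj] using hT i j

theorem isCliffordVariation_lie [DecidableEq ι] {S : ι → A}
    (hcl : ∀ i j, S i * S j + S j * S i = if i = j then 2 else 0) (N : A) :
    IsCliffordVariation S (fun i => ⁅S i, N⁆) := by
  intro i j
  have hcomm : Commute (S i * S j + S j * S i) N := by
    rw [hcl]
    split_ifs
    exacts [Commute.ofNat_left 2 N, Commute.zero_left N]
  calc _ = (S i * S j + S j * S i) * N - N * (S i * S j + S j * S i) := by
        simp only [Ring.lie_def]; noncomm_ring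
    _ = 0 := sub_eq_zero.mpr hcomm.eq

theorem commute_mul_of_anticomm {u t s : A} (ht : u * t + t * u = 0) (hs : u * s + s * u = 0) :
    Commute u (t * s) := by
  calc u * (t * s) = -(t * (u * s)) := by
        rw [← mul_assoc, eq_neg_of_add_eq_zero_left ht, neg_mul, mul_assoc]
    _ = t * s * u := by rw [eq_neg_of_add_eq_zero_left hs, mul_neg, neg_neg, mul_assoc]

theorem isSelfAdjoint_lie_of_star_eq_neg [StarRing A] {s N : A} (hs : IsSelfAdjoint s)
    (hN : star N = -N) : IsSelfAdjoint ⁅s, N⁆ := by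
  rw [IsSelfAdjoint, Ring.lie_def, star_sub, star_mul, star_mul, hs.star_eq, hN, neg_mul,
    mul_neg, sub_neg_eq_add, neg_add_eq_sub]

end Ring

section RealAlgebra

variable {ι A : Type*} [Ring A] [Algebra ℝ A]

theorem eq_zero_of_add_self_eq_zero {x : A} (h : x + x = 0) : x = 0 :=
  (smul_eq_zero.mp ((two_smul ℝ x).trans h)).resolve_left two_ne_zero

theorem IsCliffordVariation.anticomm_self {S T : ι → A} (hT : IsCliffordVariation S T) (i : ι) :
    T i * S i + S i * T i = 0 :=
  eq_zero_of_add_self_eq_zero <| by rw [← hT i i]; abel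

theorem eq_one_of_add_self_eq_two {x : A} (h : x + x = 2) : x = 1 :=
  sub_eq_zero.mp <| eq_zero_of_add_self_eq_zero <| by
    rw [sub_add_sub_comm, h, one_add_one_eq_two, sub_self]

theorem lie_smul_mul_of_anticomm {s t : A} (hs : s * s = 1) (hts : t * s + s * t = 0) :
    ⁅s, (-(1 / 2) : ℝ) • (t * s)⁆ = t := by
  have hst : s * (t * s) = -t := by
    rw [← mul_assoc, eq_neg_of_add_eq_zero_right hts, neg_mul, mul_assoc, hs, mul_one]
  rw [Ring.lie_def, mul_smul_comm, smul_mul_assoc, ← smul_sub, hst, mul_assoc, hs, mul_one]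
  module

variable [StarRing A] [StarModule ℝ A]

theorem star_smul_mul_of_anticomm {s t : A} (hs : IsSelfAdjoint s) (ht : IsSelfAdjoint t)
    (hts : t * s + s * t = 0) (c : ℝ) : star (c • (t * s)) = -(c • (t * s)) := by
  rw [star_smul, star_mul, hs.star_eq, ht.star_eq, star_trivial, eq_neg_of_add_eq_zero_right hts,
    smul_neg]

variable [DecidableEq ι] {S : ι → A} (hS : ∀ i, IsSelfAdjoint (S i))
  (hcl : ∀ i j, S i * S j + S j * S i = if i = j then 2 else 0)
include hS hcl

theorem IsCliffordVariation.exists_skew_lie_eq_and_lie_eq_zero {T : ι → A}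
    (hT : IsCliffordVariation S T) (hTsa : ∀ i, IsSelfAdjoint (T i)) (m : ι) :
    ∃ N : A, star N = -N ∧ ⁅S m, N⁆ = T m ∧ ∀ i, T i = 0 → ⁅S i, N⁆ = 0 := by
  have hlie : ⁅S m, (-(1 / 2) : ℝ) • (T m * S m)⁆ = T m :=
    lie_smul_mul_of_anticomm (eq_one_of_add_self_eq_two (by simpa using hcl m m))
      (hT.anticomm_self m)
  refine ⟨_, star_smul_mul_of_anticomm (hS m) (hTsa m) (hT.anticomm_self m) _, hlie,
    fun i hi => ?_⟩
  by_cases him : i = m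
  · rw [him, hlie, ← him, hi]
  have hTm : S i * T m + T m * S i = 0 := by
    rw [add_comm]; exact hT.anticomm_of_eq_zero m hi
  have hSm : S i * S m + S m * S i = 0 := by simpa [him] using hcl i m
  rw [Ring.lie_def, mul_smul_comm, smul_mul_assoc, (commute_mul_of_anticomm hTm hSm).eq, sub_self]

theorem IsCliffordVariation.exists_skew_lie_of_support_subset (s : Finset ι) :
    ∀ T : ι → A, IsCliffordVariation S T → (∀ i, IsSelfAdjoint (T i)) → (∀ i ∉ s, T i = 0) →
      ∃ N : A, star N = -N ∧ ∀ i, T i = ⁅S i, N⁆ := by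
  induction s using Finset.induction_on with
  | empty =>
    intro T _ _ hT0
    exact ⟨0, by simp, fun i => by simp [hT0 i (Finset.notMem_empty i), Ring.lie_def]⟩
  | insert m s _ ih =>
    intro T hT hTsa hT0
    obtain ⟨N₁, hN₁, hN₁m, hN₁0⟩ := hT.exists_skew_lie_eq_and_lie_eq_zero hS hcl hTsa m
    have hT'0 : ∀ i ∉ s, T i - ⁅S i, N₁⁆ = 0 := by
      intro i hi
      by_cases him : i = m
      · rw [him, hN₁m, sub_self]
      · have hTi := hT0 i (by simp [him, hi])
        rw [hTi, hN₁0 i hTi, sub_self]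
    obtain ⟨N₂, hN₂, hN₂lie⟩ := ih (fun i => T i - ⁅S i, N₁⁆)
      (hT.sub (isCliffordVariation_lie hcl N₁))
      (fun i => (hTsa i).sub (isSelfAdjoint_lie_of_star_eq_neg (hS i) hN₁)) hT'0
    refine ⟨N₁ + N₂, by rw [star_add, hN₁, hN₂, neg_add], fun i => ?_⟩
    rw [Ring.lie_def, mul_add, add_mul, ← sub_add_sub_comm, ← Ring.lie_def, ← Ring.lie_def,
      ← hN₂lie i]
    abel

theorem IsCliffordVariation.exists_skew_lie [Fintype ι] {T : ι → A}
    (hT : IsCliffordVariation S T) (hTsa : ∀ i, IsSelfAdjoint (T i)) :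
    ∃ N : A, star N = -N ∧ ∀ i, T i = ⁅S i, N⁆ :=
  exists_skew_lie_of_support_subset hS hcl Finset.univ T hT hTsa (by simp)

end RealAlgebra

/-- Lemma 7(1): if symmetric endomorphisms `T₀,…,T₈` of `ℝ¹⁶` satisfy
`TᵢSⱼ + TⱼSᵢ + SⱼTᵢ + SᵢTⱼ = 0` for a `Cl⁺(9)`-system `S₀,…,S₈`, then there is a single
skew-symmetric endomorphism `N` with `Tᵢ = [Sᵢ, N] = SᵢN − NSᵢ` for every `i`. -/
theorem stmt15 (S : Fin 9 → (E16 →ₗ[ℝ] E16))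
    (hsymm : ∀ i, LinearMap.adjoint (S i) = S i)
    (hcl : ∀ i j, S i * S j + S j * S i =
      if i = j then (2 : ℝ) • (1 : E16 →ₗ[ℝ] E16) else 0)
    (T : Fin 9 → (E16 →ₗ[ℝ] E16))
    (hTsymm : ∀ i, LinearMap.adjoint (T i) = T i)
    (hTS : ∀ i j, T i * S j + T j * S i + S j * T i + S i * T j = 0) :
    ∃ N : E16 →ₗ[ℝ] E16, LinearMap.adjoint N = -N ∧ ∀ i, T i = S i * N - N * S i := by
  have hSsa : ∀ i, IsSelfAdjoint (S i) := fun i => (LinearMap.star_eq_adjoint _).trans (hsymm i)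
  have hTsa : ∀ i, IsSelfAdjoint (T i) := fun i => (LinearMap.star_eq_adjoint _).trans (hTsymm i)
  have hcl' : ∀ i j, S i * S j + S j * S i = if i = j then 2 else 0 := by
    simpa only [two_smul, one_add_one_eq_two] using hcl
  obtain ⟨N, hN, hNlie⟩ := IsCliffordVariation.exists_skew_lie hSsa hcl' hTS hTsa
  exact ⟨N, (LinearMap.star_eq_adjoint N).symm.trans hN,
    fun i => (hNlie i).trans (Ring.lie_def _ _)⟩
end

section
/- Let S_0, …, S_8 be a Cl⁺(9)-system on ℝ^16. Then there do not exist two nonzero subspaces E_1, E_2 ⊂ ℝ^16 with ℝ^16 = E_1 ⊕ E_2 and E_1 orthogonal to E_2, such that Σ_{i=0}^{8} (⟨S_iX, Z⟩S_iY − ⟨S_iY, Z⟩S_iX) = 0 for all X, Y ∈ E_α and Z ∈ E_β with α ≠ β (α, β ∈ {1, 2}). -/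
/-!
Write `φ(x, z) = (⟪Sᵢ x, z⟫)ᵢ ∈ ℝ⁹`. Pairing the curvature condition for `X, Y ∈ E_α`, `Z ∈ E_β`
with `W = ∑ᵢ φ(Y, Z)ᵢ Sᵢ Y` and using `(∑ᵢ bᵢ Sᵢ)² = ‖b‖²` gives
`‖Y‖² ⟪φ(X, Z), φ(Y, Z)⟫ = ‖φ(Y, Z)‖² ⟪X, Y⟫`, so `X ↦ φ(X, Z)` is conformal on `E_α`; pairing
with an arbitrary `W` shows moreover `⟪φ(X, Z), φ(Y, W)⟫ = 0` whenever `Z ⊥ W`. Hence for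
orthonormal bases `(e_a)` of `E₁` and `(f_b)` of `E₂` the vectors `φ(e_a, f_b)` are orthogonal
and of one common length. If that length is positive, `dim E₁ · dim E₂ ≤ 9`, impossible when
`dim E₁ + dim E₂ = 16`. If it is zero, each `Sᵢ` maps `E₁` into `E₂ᗮ` and `E₂` into `E₁ᗮ`, and
since `(Sᵢ x)ᵢ` is orthonormal for a unit vector `x`, both `E₁ᗮ` and `E₂ᗮ` have dimension at
least 9, again impossible.
-/

open RealInnerProductSpace Finset Module

variable {ι V W : Type*} [NormedAddCommGroup V] [InnerProductSpace ℝ V]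
  [NormedAddCommGroup W] [InnerProductSpace ℝ W]

theorem LinearMap.norm_sq_apply_mul_norm_sq_comm (L : V →ₗ[ℝ] W) {K : Submodule ℝ V}
    (hL : ∀ x ∈ K, ∀ y ∈ K, ‖y‖ ^ 2 * ⟪L x, L y⟫ = ‖L y‖ ^ 2 * ⟪x, y⟫)
    {x y : V} (hx : x ∈ K) (hy : y ∈ K) :
    ‖L x‖ ^ 2 * ‖y‖ ^ 2 = ‖L y‖ ^ 2 * ‖x‖ ^ 2 := by
  have of_inner_ne_zero : ∀ x ∈ K, ∀ y ∈ K, ⟪x, y⟫ ≠ 0 →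
      ‖L x‖ ^ 2 * ‖y‖ ^ 2 = ‖L y‖ ^ 2 * ‖x‖ ^ 2 := by
    intro x hx y hy hxy
    have hxy' := hL x hx y hy
    have hyx := hL y hy x hx
    rw [real_inner_comm (L x), real_inner_comm x] at hyx
    refine mul_right_cancel₀ hxy ?_
    linear_combination ‖x‖ ^ 2 * hxy' - ‖y‖ ^ 2 * hyx
  by_cases hxy : ⟪x, y⟫ = 0
  · rcases eq_or_ne x 0 with rfl | hx0
    · simp
    rcases eq_or_ne y 0 with rfl | hy0
    · simp
    have hm : x + y ∈ K := K.add_mem hx hy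
    have hxm : ⟪x, x + y⟫ ≠ 0 := by
      rw [inner_add_right, hxy, add_zero, real_inner_self_eq_norm_sq]; positivity
    have hym : ⟪y, x + y⟫ ≠ 0 := by
      rw [inner_add_right, real_inner_comm, hxy, zero_add, real_inner_self_eq_norm_sq]; positivity
    have h₁ := of_inner_ne_zero x hx _ hm hxm
    have h₂ := of_inner_ne_zero y hy _ hm hym
    have hm0 : ‖x + y‖ ^ 2 ≠ 0 := by
      rw [← real_inner_self_eq_norm_sq, real_inner_add_add_self, hxy, real_inner_self_eq_norm_sq,
        real_inner_self_eq_norm_sq]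
      positivity
    refine mul_right_cancel₀ hm0 ?_
    linear_combination ‖y‖ ^ 2 * h₁ - ‖x‖ ^ 2 * h₂
  · exact of_inner_ne_zero x hx y hy hxy

structure IsCliffordSystem_s19 [DecidableEq ι] (S : ι → V →ₗ[ℝ] V) : Prop where
  isSymmetric : ∀ i, (S i).IsSymmetric
  anticomm : ∀ i j, S i * S j + S j * S i = if i = j then (2 : ℝ) • 1 else 0

def cliffordCoeffs (S : ι → V →ₗ[ℝ] V) (z : V) : V →ₗ[ℝ] EuclideanSpace ℝ ι where
  toFun x := WithLp.toLp 2 fun i => ⟪S i x, z⟫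
  map_add' x y := by ext i; simp [inner_add_left]
  map_smul' c x := by ext i; simp [real_inner_smul_left]

@[simp]
theorem cliffordCoeffs_apply (S : ι → V →ₗ[ℝ] V) (z x : V) (i : ι) :
    cliffordCoeffs S z x i = ⟪S i x, z⟫ := rfl

section

variable [Fintype ι]

/-- `∑ᵢ (Sᵢ X ∧ Sᵢ Y) Z`, the Cayley part of the curvature tensor. -/
def cayleyCurvature (S : ι → V →ₗ[ℝ] V) (X Y Z : V) : V :=
  ∑ i, (⟪S i X, Z⟫ • S i Y - ⟪S i Y, Z⟫ • S i X)

theorem inner_cliffordCoeffs (S : ι → V →ₗ[ℝ] V) (z w x y : V) :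
    ⟪cliffordCoeffs S z x, cliffordCoeffs S w y⟫ = ∑ i, ⟪S i x, z⟫ * ⟪S i y, w⟫ := by
  simp [PiLp.inner_apply, mul_comm]

theorem inner_cliffordCoeffs_right (S : ι → V →ₗ[ℝ] V) (b : EuclideanSpace ℝ ι) (w x : V) :
    ⟪b, cliffordCoeffs S w x⟫ = ⟪∑ i, b i • S i x, w⟫ := by
  simp [PiLp.inner_apply, sum_inner, real_inner_smul_left, mul_comm]

theorem inner_cayleyCurvature (S : ι → V →ₗ[ℝ] V) (X Y Z W : V) :
    ⟪cayleyCurvature S X Y Z, W⟫ = ⟪cliffordCoeffs S Z X, cliffordCoeffs S W Y⟫ -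
      ⟪cliffordCoeffs S Z Y, cliffordCoeffs S W X⟫ := by
  simp only [cayleyCurvature, inner_cliffordCoeffs, sum_inner, inner_sub_left,
    real_inner_smul_left, sum_sub_distrib]

end

namespace IsCliffordSystem_s19

variable [DecidableEq ι] {S : ι → V →ₗ[ℝ] V} (hS : IsCliffordSystem_s19 S)
include hS

theorem anticomm_apply (i j : ι) (x : V) :
    S i (S j x) + S j (S i x) = if i = j then (2 : ℝ) • x else 0 := by
  have := LinearMap.congr_fun (hS.anticomm i j) x
  split_ifs at this ⊢ <;> simpa using this

theorem cliffordCoeffs_comm (z x : V) : cliffordCoeffs S z x = cliffordCoeffs S x z := by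
  ext i
  simp [hS.isSymmetric i x z, real_inner_comm]

theorem inner_apply_add_inner_apply (i j : ι) (x y : V) :
    ⟪S i x, S j y⟫ + ⟪S j x, S i y⟫ = if i = j then 2 * ⟪x, y⟫ else 0 := by
  rw [hS.isSymmetric, hS.isSymmetric, ← inner_add_right, hS.anticomm_apply]
  split_ifs <;> simp [real_inner_smul_right]

theorem inner_apply_apply_self (i j : ι) (x : V) :
    ⟪S i x, S j x⟫ = if i = j then ‖x‖ ^ 2 else 0 := by
  have h := hS.inner_apply_add_inner_apply i j x x
  rw [real_inner_comm (S i x) (S j x)] at h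
  split_ifs at h ⊢ <;> linarith [real_inner_self_eq_norm_sq x]

theorem linearIndependent_apply {x : V} (hx : x ≠ 0) : LinearIndependent ℝ fun i => S i x := by
  refine linearIndependent_of_ne_zero_of_inner_eq_zero (fun i hi => hx ?_) fun i j hij => ?_
  · have := hS.inner_apply_apply_self i i x
    simpa [hi] using this.symm
  · simpa [hij] using hS.inner_apply_apply_self i j x

variable [Fintype ι]

theorem inner_sum_smul_apply (b : EuclideanSpace ℝ ι) (x y : V) :
    ⟪∑ i, b i • S i x, ∑ j, b j • S j y⟫ = ‖b‖ ^ 2 * ⟪x, y⟫ := by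
  have expand : ⟪∑ i, b i • S i x, ∑ j, b j • S j y⟫ =
      ∑ i, ∑ j, b i * b j * ⟪S i x, S j y⟫ := by
    simp only [sum_inner, inner_sum, real_inner_smul_left, real_inner_smul_right]
    rw [sum_comm]
    exact sum_congr rfl fun i _ => sum_congr rfl fun j _ => by ring
  have swap : ∑ i, ∑ j, b i * b j * ⟪S i x, S j y⟫ = ∑ i, ∑ j, b i * b j * ⟪S j x, S i y⟫ := by
    rw [sum_comm]
    exact sum_congr rfl fun i _ => sum_congr rfl fun j _ => by ring
  have double : 2 * ∑ i, ∑ j, b i * b j * ⟪S i x, S j y⟫ = 2 * (‖b‖ ^ 2 * ⟪x, y⟫) := by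
    calc 2 * ∑ i, ∑ j, b i * b j * ⟪S i x, S j y⟫
        = ∑ i, ∑ j, b i * b j * (⟪S i x, S j y⟫ + ⟪S j x, S i y⟫) := by
          rw [two_mul]
          nth_rewrite 2 [swap]
          simp only [← sum_add_distrib, mul_add]
      _ = ∑ i, b i ^ 2 * (2 * ⟪x, y⟫) := by
          simp [hS.inner_apply_add_inner_apply, sq]
      _ = 2 * (‖b‖ ^ 2 * ⟪x, y⟫) := by
          simp only [EuclideanSpace.norm_sq_eq, Real.norm_eq_abs, sq_abs, sum_mul]
          rw [mul_sum]
          exact sum_congr rfl fun i _ => by ring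
  rw [expand]
  linarith

theorem cliffordCoeffs_sum_smul_apply_self (b : EuclideanSpace ℝ ι) (y : V) :
    cliffordCoeffs S (∑ j, b j • S j y) y = ‖y‖ ^ 2 • b := by
  ext i
  simp [inner_sum, real_inner_smul_right, hS.inner_apply_apply_self, mul_comm]

theorem card_add_finrank_le_finrank [FiniteDimensional ℝ V] (G : Submodule ℝ V) {x : V}
    (hx : x ≠ 0) (hxG : ∀ z ∈ G, cliffordCoeffs S z x = 0) :
    Fintype.card ι + finrank ℝ G ≤ finrank ℝ V := by
  have hspan : Submodule.span ℝ (Set.range fun i => S i x) ≤ Gᗮ := by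
    rw [Submodule.span_le]
    rintro _ ⟨i, rfl⟩
    rw [SetLike.mem_coe, Submodule.mem_orthogonal']
    intro z hz
    simpa using congr_arg (· i) (hxG z hz)
  have := Submodule.finrank_mono hspan
  rw [finrank_span_eq_card (hS.linearIndependent_apply hx)] at this
  linarith [G.finrank_add_finrank_orthogonal]

theorem norm_sq_mul_inner_cliffordCoeffs {X Y Z : V} (hC : cayleyCurvature S X Y Z = 0) :
    ‖Y‖ ^ 2 * ⟪cliffordCoeffs S Z X, cliffordCoeffs S Z Y⟫ =
      ‖cliffordCoeffs S Z Y‖ ^ 2 * ⟪X, Y⟫ := by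
  set b := cliffordCoeffs S Z Y
  have h := inner_cayleyCurvature S X Y Z (∑ j, b j • S j Y)
  rw [hC, inner_zero_left, hS.cliffordCoeffs_sum_smul_apply_self, inner_cliffordCoeffs_right,
    hS.inner_sum_smul_apply, real_inner_smul_right] at h
  linarith

theorem inner_cliffordCoeffs_eq_zero {X Y Z : V} (hC : cayleyCurvature S X Y Z = 0)
    (hXY : ⟪X, Y⟫ = 0) (hY : Y ≠ 0) : ⟪cliffordCoeffs S Z X, cliffordCoeffs S Z Y⟫ = 0 := by
  have h := hS.norm_sq_mul_inner_cliffordCoeffs hC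
  rw [hXY, mul_zero] at h
  exact (mul_eq_zero.mp h).resolve_left (by positivity)

variable {F G : Submodule ℝ V} (hFG : ∀ X ∈ F, ∀ Y ∈ F, ∀ Z ∈ G, cayleyCurvature S X Y Z = 0)
include hFG

theorem norm_cliffordCoeffs_sq_mul_norm_sq {X Y Z : V} (hX : X ∈ F) (hY : Y ∈ F) (hZ : Z ∈ G) :
    ‖cliffordCoeffs S Z X‖ ^ 2 * ‖Y‖ ^ 2 = ‖cliffordCoeffs S Z Y‖ ^ 2 * ‖X‖ ^ 2 :=
  (cliffordCoeffs S Z).norm_sq_apply_mul_norm_sq_comm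
    (fun _ hx _ hy => hS.norm_sq_mul_inner_cliffordCoeffs (hFG _ hx _ hy Z hZ)) hX hY

variable (hGF : ∀ X ∈ G, ∀ Y ∈ G, ∀ Z ∈ F, cayleyCurvature S X Y Z = 0)
include hGF

theorem inner_cliffordCoeffs_eq_zero_of_orthogonal {X Y Z W : V} (hX : X ∈ F) (hY : Y ∈ F)
    (hZ : Z ∈ G) (hW : W ∈ G) (hZW : ⟪Z, W⟫ = 0) (hW0 : W ≠ 0) :
    ⟪cliffordCoeffs S Z X, cliffordCoeffs S W Y⟫ = 0 := by
  have diag : ∀ v ∈ F, ⟪cliffordCoeffs S Z v, cliffordCoeffs S W v⟫ = 0 := fun v hv => by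
    rw [hS.cliffordCoeffs_comm Z, hS.cliffordCoeffs_comm W]
    exact hS.inner_cliffordCoeffs_eq_zero (hGF Z hZ W hW v hv) hZW hW0
  have swap : ⟪cliffordCoeffs S Z X, cliffordCoeffs S W Y⟫ =
      ⟪cliffordCoeffs S Z Y, cliffordCoeffs S W X⟫ := by
    rw [← sub_eq_zero, ← inner_cayleyCurvature, hFG X hX Y hY Z hZ, inner_zero_left]
  have h := diag (X + Y) (F.add_mem hX hY)
  rw [map_add, map_add, inner_add_left, inner_add_right, inner_add_right, diag X hX,
    diag Y hY] at h
  linarith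

theorem finrank_mul_finrank_le_card [FiniteDimensional ℝ V] {x₁ z₁ : V} (hx₁ : x₁ ∈ F)
    (hz₁ : z₁ ∈ G) (hne : cliffordCoeffs S z₁ x₁ ≠ 0) :
    finrank ℝ F * finrank ℝ G ≤ Fintype.card ι := by
  set e := stdOrthonormalBasis ℝ F
  set f := stdOrthonormalBasis ℝ G
  have he : ∀ a, ‖(e a : V)‖ = 1 := e.orthonormal.1
  have hf : ∀ b, ‖(f b : V)‖ = 1 := f.orthonormal.1
  set v : Fin (finrank ℝ F) × Fin (finrank ℝ G) → EuclideanSpace ℝ ι :=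
    fun p => cliffordCoeffs S (f p.2) (e p.1)
  have hv : ∀ p, v p ≠ 0 := by
    rintro ⟨a, b⟩ hv
    have h₁ := hS.norm_cliffordCoeffs_sq_mul_norm_sq hFG (e a).2 hx₁ (f b).2
    have h₂ := hS.norm_cliffordCoeffs_sq_mul_norm_sq hGF (f b).2 hz₁ hx₁
    rw [← hS.cliffordCoeffs_comm (f b) x₁, ← hS.cliffordCoeffs_comm z₁ x₁, hf] at h₂
    rw [show cliffordCoeffs S (f b) (e a) = 0 from hv, norm_zero, he] at h₁
    apply hne
    rw [← norm_eq_zero, ← sq_eq_zero_iff]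
    nlinarith
  have ho : Pairwise fun p q => ⟪v p, v q⟫ = 0 := by
    rintro ⟨a, b⟩ ⟨a', b'⟩ hpq
    by_cases hb : b = b'
    · subst hb
      have ha : a ≠ a' := fun h => hpq (by rw [h])
      exact hS.inner_cliffordCoeffs_eq_zero (hFG _ (e a).2 _ (e a').2 _ (f b).2)
        (e.orthonormal.2 ha) (by simp [← norm_ne_zero_iff])
    · exact hS.inner_cliffordCoeffs_eq_zero_of_orthogonal hFG hGF (e a).2 (e a').2 (f b).2
        (f b').2 (f.orthonormal.2 hb) (by simp [← norm_ne_zero_iff])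
  simpa using (linearIndependent_of_ne_zero_of_inner_eq_zero hv ho).fintype_card_le_finrank

end IsCliffordSystem_s19

/-- Algebraic core of the proof of Lemma 7(4): for a `Cl⁺(9)`-system on `ℝ¹⁶`, there is
no orthogonal decomposition `ℝ¹⁶ = E₁ ⊕ E₂` into nonzero subspaces such that
`Σᵢ (⟨SᵢX,Z⟩SᵢY − ⟨SᵢY,Z⟩SᵢX) = 0` for all `X, Y ∈ E_α`, `Z ∈ E_β`, `α ≠ β`. -/
theorem stmt19 (S : Fin 9 → (E16 →ₗ[ℝ] E16))
    (hsymm : ∀ i, LinearMap.adjoint (S i) = S i)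
    (hcl : ∀ i j, S i * S j + S j * S i =
      if i = j then (2 : ℝ) • (1 : E16 →ₗ[ℝ] E16) else 0) :
    ¬ ∃ E₁ E₂ : Submodule ℝ E16, E₁ ≠ ⊥ ∧ E₂ ≠ ⊥ ∧ E₁ ⊔ E₂ = ⊤ ∧
      (∀ x ∈ E₁, ∀ y ∈ E₂, (inner ℝ x y : ℝ) = 0) ∧
      (∀ X ∈ E₁, ∀ Y ∈ E₁, ∀ Z ∈ E₂,
        ∑ i, ((inner ℝ (S i X) Z : ℝ) • S i Y - (inner ℝ (S i Y) Z : ℝ) • S i X) = 0) ∧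
      (∀ X ∈ E₂, ∀ Y ∈ E₂, ∀ Z ∈ E₁,
        ∑ i, ((inner ℝ (S i X) Z : ℝ) • S i Y - (inner ℝ (S i Y) Z : ℝ) • S i X) = 0) := by
  rintro ⟨E₁, E₂, hE₁, hE₂, hsup, -, hc₁, hc₂⟩
  have hS : IsCliffordSystem_s19 S :=
    ⟨fun i => (LinearMap.isSymmetric_iff_isSelfAdjoint _).mpr
      (LinearMap.isSelfAdjoint_iff'.mpr (hsymm i)), hcl⟩
  have hdim : 16 ≤ finrank ℝ E₁ + finrank ℝ E₂ := by
    have := Submodule.finrank_add_le_finrank_add_finrank E₁ E₂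
    rwa [hsup, finrank_top, finrank_euclideanSpace_fin] at this
  by_cases hdeg : ∀ x ∈ E₁, ∀ z ∈ E₂, cliffordCoeffs S z x = 0
  · obtain ⟨x, hx, hx0⟩ := (Submodule.ne_bot_iff _).mp hE₁
    obtain ⟨z, hz, hz0⟩ := (Submodule.ne_bot_iff _).mp hE₂
    have h₁ := hS.card_add_finrank_le_finrank E₂ hx0 (hdeg x hx)
    have h₂ := hS.card_add_finrank_le_finrank E₁ hz0 fun w hw => by
      rw [hS.cliffordCoeffs_comm]; exact hdeg w hw z hz
    simp only [Fintype.card_fin, finrank_euclideanSpace] at h₁ h₂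
    omega
  · push Not at hdeg
    obtain ⟨x, hx, z, hz, hne⟩ := hdeg
    have hprod := hS.finrank_mul_finrank_le_card hc₁ hc₂ hx hz hne
    rw [Fintype.card_fin] at hprod
    have h₁ : 0 < finrank ℝ E₁ := Nat.pos_of_ne_zero (Submodule.finrank_eq_zero.not.mpr hE₁)
    have h₂ : 0 < finrank ℝ E₂ := Nat.pos_of_ne_zero (Submodule.finrank_eq_zero.not.mpr hE₂)
    nlinarith
end
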